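/- arXiv:2302.06889 — 7 statements merged into one kernel-verified Lean document; each statement's English description precedes it below -/
import Mathlib

section
/- In every sequence of t consecutive 2-changes performed by the 2-Opt heuristic on a TSP instance with n vertices, the number of disjoint pairs of 2-changes that are linked by an edge (i.e., pairs such that some edge added to the tour in the first 2-change of the pair is removed from the tour in the second 2-change of the pair) is at least (2t - n)/7. -/
open scoped Classical

/-- the edge removed at event `e` (step `e.1`, slot `e.2`). -/
private def reEdge {n t : ℕ} (rem : Fin t → Sym2 (Fin n) × Sym2 (Fin n))
    (e : Fin t × Bool) : Sym2 (Fin n) :=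
  if e.2 then (rem e.1).1 else (rem e.1).2

/-- steps before `e.1` at which the edge removed at `e` was added. -/
private noncomputable def Sset {n t : ℕ}
    (rem add : Fin t → Sym2 (Fin n) × Sym2 (Fin n)) (e : Fin t × Bool) : Finset (Fin t) :=
  Finset.univ.filter (fun i => i < e.1 ∧
    ((add i).1 = reEdge rem e ∨ (add i).2 = reEdge rem e))

private lemma fwd_lemma {n t : ℕ}
    (tours : Fin (t + 1) → Finset (Sym2 (Fin n)))
    (rem add : Fin t → Sym2 (Fin n) × Sym2 (Fin n))
    (hstep : ∀ i : Fin t,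
      (rem i).1 ∈ tours i.castSucc ∧ (rem i).2 ∈ tours i.castSucc ∧ (rem i).1 ≠ (rem i).2 ∧
      (add i).1 ∉ tours i.castSucc ∧ (add i).2 ∉ tours i.castSucc ∧ (add i).1 ≠ (add i).2 ∧
      tours i.succ = (tours i.castSucc \ {(rem i).1, (rem i).2}) ∪ {(add i).1, (add i).2})
    (edge : Sym2 (Fin n)) :
    ∀ b a : Fin (t+1), a ≤ b → edge ∉ tours a →
      (∀ i : Fin t, a ≤ i.castSucc → i.succ ≤ b → edge ≠ (add i).1 ∧ edge ≠ (add i).2) →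
      edge ∉ tours b := by
  intro b
  induction b using Fin.induction with
  | zero =>
    intro a ha h _
    have : a = 0 := le_antisymm ha (Fin.zero_le a)
    rwa [this] at h
  | succ i ih =>
    intro a ha h hnoadd
    by_cases hcase : a ≤ i.castSucc
    · have h1 : edge ∉ tours i.castSucc := by
        refine ih a hcase h (fun i' h1 h2 => hnoadd i' h1 ?_)
        have := Fin.le_def.mp h2
        simp only [Fin.le_def, Fin.val_succ, Fin.coe_castSucc] at *
        omega
      have h2 := hnoadd i hcase (le_refl _)
      intro hmem
      rw [(hstep i).2.2.2.2.2.2] at hmem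
      simp only [Finset.mem_union, Finset.mem_sdiff, Finset.mem_insert,
        Finset.mem_singleton] at hmem
      rcases hmem with ⟨hm, _⟩ | (hm | hm)
      · exact h1 hm
      · exact h2.1 hm
      · exact h2.2 hm
    · have : a = i.succ := by
        apply Fin.ext
        have h1 := Fin.le_def.mp ha
        simp only [Fin.le_def, Fin.coe_castSucc, Fin.val_succ] at *
        omega
      rwa [this] at h

private lemma back_lemma {n t : ℕ}
    (tours : Fin (t + 1) → Finset (Sym2 (Fin n)))
    (rem add : Fin t → Sym2 (Fin n) × Sym2 (Fin n))
    (hstep : ∀ i : Fin t,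
      (rem i).1 ∈ tours i.castSucc ∧ (rem i).2 ∈ tours i.castSucc ∧ (rem i).1 ≠ (rem i).2 ∧
      (add i).1 ∉ tours i.castSucc ∧ (add i).2 ∉ tours i.castSucc ∧ (add i).1 ≠ (add i).2 ∧
      tours i.succ = (tours i.castSucc \ {(rem i).1, (rem i).2}) ∪ {(add i).1, (add i).2})
    (edge : Sym2 (Fin n)) :
    ∀ b : Fin (t+1), edge ∈ tours b →
      (∀ i : Fin t, i.succ ≤ b → edge ≠ (add i).1 ∧ edge ≠ (add i).2) →
      edge ∈ tours 0 := by
  intro b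
  induction b using Fin.induction with
  | zero => intro h _; exact h
  | succ i ih =>
    intro h hnoadd
    have h2 := hnoadd i (le_refl _)
    rw [(hstep i).2.2.2.2.2.2] at h
    simp only [Finset.mem_union, Finset.mem_sdiff, Finset.mem_insert,
      Finset.mem_singleton] at h
    rcases h with ⟨hm, _⟩ | (hm | hm)
    · refine ih hm (fun i' h2' => hnoadd i' ?_)
      have := Fin.le_def.mp h2'
      simp only [Fin.le_def, Fin.val_succ, Fin.coe_castSucc] at *
      omega
    · exact absurd hm h2.1
    · exact absurd hm h2.2

/-- An edge removed at `j1` cannot be removed again at `j2 > j1` if it is never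
    added at any step in `[j1, j2)`. -/
private lemma no_reappear {n t : ℕ}
    (tours : Fin (t + 1) → Finset (Sym2 (Fin n)))
    (rem add : Fin t → Sym2 (Fin n) × Sym2 (Fin n))
    (hstep : ∀ i : Fin t,
      (rem i).1 ∈ tours i.castSucc ∧ (rem i).2 ∈ tours i.castSucc ∧ (rem i).1 ≠ (rem i).2 ∧
      (add i).1 ∉ tours i.castSucc ∧ (add i).2 ∉ tours i.castSucc ∧ (add i).1 ≠ (add i).2 ∧
      tours i.succ = (tours i.castSucc \ {(rem i).1, (rem i).2}) ∪ {(add i).1, (add i).2})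
    (edge : Sym2 (Fin n)) (j1 j2 : Fin t) (h12 : j1 < j2)
    (hrem1 : edge = (rem j1).1 ∨ edge = (rem j1).2)
    (hrem2 : edge = (rem j2).1 ∨ edge = (rem j2).2)
    (hnoadd : ∀ i : Fin t, j1 ≤ i → i < j2 → edge ≠ (add i).1 ∧ edge ≠ (add i).2) :
    False := by
  have hmem2 : edge ∈ tours j2.castSucc := by
    rcases hrem2 with h | h
    · rw [h]; exact (hstep j2).1
    · rw [h]; exact (hstep j2).2.1
  have hnot1 : edge ∉ tours j1.succ := by
    rw [(hstep j1).2.2.2.2.2.2]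
    simp only [Finset.mem_union, Finset.mem_sdiff, Finset.mem_insert,
      Finset.mem_singleton]
    push_neg
    have h2 := hnoadd j1 (le_refl _) h12
    exact ⟨fun _ => hrem1, h2.1, h2.2⟩
  refine absurd hmem2 (fwd_lemma tours rem add hstep edge j2.castSucc j1.succ ?_ hnot1 ?_)
  · simp only [Fin.le_def, Fin.val_succ, Fin.coe_castSucc]
    exact Fin.lt_def.mp h12
  · intro i hi1 hi2
    refine hnoadd i ?_ ?_
    · simp only [Fin.le_def, Fin.val_succ, Fin.coe_castSucc] at hi1 ⊢
      omega
    · simp only [Fin.le_def, Fin.lt_def, Fin.val_succ, Fin.coe_castSucc] at hi2 ⊢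
      omega

/-- Greedy matching in a bounded-degree multigraph of link events. -/
private lemma greedy {t : ℕ} (f : Fin t × Bool → Fin t)
    (G₀ : Finset (Fin t × Bool))
    (hf : ∀ i, (G₀.filter (fun e => f e = i)).card ≤ 2) :
    ∀ m : ℕ, ∀ G : Finset (Fin t × Bool), G.card ≤ m → G ⊆ G₀ →
    ∃ pairs : Finset (Fin t × Fin t),
      (∀ p ∈ pairs, ∃ e ∈ G, p = (f e, e.1)) ∧
      (∀ p ∈ pairs, ∀ q ∈ pairs, p ≠ q →
        p.1 ≠ q.1 ∧ p.1 ≠ q.2 ∧ p.2 ≠ q.1 ∧ p.2 ≠ q.2) ∧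
      G.card ≤ 7 * pairs.card := by
  intro m
  induction m with
  | zero =>
    intro G hG _
    refine ⟨∅, by simp, by simp, ?_⟩
    simp only [Finset.card_empty]
    omega
  | succ m ih =>
    intro G hG hsub
    rcases G.eq_empty_or_nonempty with hE | ⟨e0, he0⟩
    · exact ⟨∅, by simp, by simp, by simp [hE]⟩
    set i := f e0 with hi
    set j := e0.1 with hj
    set D := G.filter (fun e => e.1 = i ∨ e.1 = j ∨ f e = i ∨ f e = j) with hD
    have he0D : e0 ∈ D := by
      simp only [hD, Finset.mem_filter]
      exact ⟨he0, Or.inr (Or.inl hj.symm)⟩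
    -- cardinality bounds for the pieces
    have hcard_fst : ∀ k : Fin t, (G.filter (fun e => e.1 = k)).card ≤ 2 := by
      intro k
      have hsub2 : G.filter (fun e => e.1 = k) ⊆ {(k, true), (k, false)} := by
        intro e he
        simp only [Finset.mem_filter] at he
        simp only [Finset.mem_insert, Finset.mem_singleton]
        rcases e with ⟨e1, e2⟩
        cases e2
        · right; simp_all
        · left; simp_all
      calc (G.filter (fun e => e.1 = k)).card
          ≤ ({(k, true), (k, false)} : Finset (Fin t × Bool)).card :=
            Finset.card_le_card hsub2
        _ ≤ 2 := Finset.card_insert_le _ _ |>.trans (by simp)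
    have hcard_f : ∀ k : Fin t, (G.filter (fun e => f e = k)).card ≤ 2 := by
      intro k
      exact le_trans (Finset.card_le_card (Finset.filter_subset_filter _ hsub)) (hf k)
    have hD7 : D.card ≤ 7 := by
      have hsubD : D ⊆ (G.filter (fun e => e.1 = i)) ∪
          ((G.filter (fun e => e.1 = j)).erase e0) ∪
          (G.filter (fun e => f e = i)) ∪ (G.filter (fun e => f e = j)) := by
        intro e he
        simp only [hD, Finset.mem_filter] at he
        obtain ⟨heG, hcase⟩ := he
        simp only [Finset.mem_union, Finset.mem_erase, Finset.mem_filter]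
        by_cases heq : e = e0
        · subst heq
          exact Or.inl (Or.inr ⟨heG, rfl⟩)
        · rcases hcase with h | h | h | h
          · exact Or.inl (Or.inl (Or.inl ⟨heG, h⟩))
          · exact Or.inl (Or.inl (Or.inr ⟨heq, heG, h⟩))
          · exact Or.inl (Or.inr ⟨heG, h⟩)
          · exact Or.inr ⟨heG, h⟩
      have he0B : e0 ∈ G.filter (fun e => e.1 = j) := by
        simp only [Finset.mem_filter]; exact ⟨he0, hj.symm⟩
      have hB : ((G.filter (fun e => e.1 = j)).erase e0).card ≤ 1 := by
        rw [Finset.card_erase_of_mem he0B]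
        have := hcard_fst j
        omega
      calc D.card ≤ _ := Finset.card_le_card hsubD
        _ ≤ _ := Finset.card_union_le _ _
        _ ≤ _ + (G.filter (fun e => f e = j)).card := Nat.add_le_add_right (Finset.card_union_le _ _) _
        _ ≤ _ + _ + (G.filter (fun e => f e = j)).card :=
            Nat.add_le_add_right (Nat.add_le_add_right (Finset.card_union_le _ _) _) _
        _ ≤ 2 + 1 + 2 + 2 := by
            have := hcard_fst i; have := hcard_f i; have := hcard_f j
            omega
        _ ≤ 7 := by omega
    have hDsub : D ⊆ G := Finset.filter_subset _ _
    have hcard' : (G \ D).card ≤ m := by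
      have h1 : (G \ D).card = G.card - D.card := Finset.card_sdiff_of_subset hDsub
      have h2 : 1 ≤ D.card := Finset.card_pos.mpr ⟨e0, he0D⟩
      have h3 : D.card ≤ G.card := Finset.card_le_card hDsub
      omega
    obtain ⟨pairs', hp1, hp2, hp3⟩ :=
      ih (G \ D) hcard' (le_trans (Finset.sdiff_subset) hsub)
    have hnotin : (i, j) ∉ pairs' := by
      intro hmem
      obtain ⟨e, heG, hpe⟩ := hp1 _ hmem
      simp only [Finset.mem_sdiff, hD, Finset.mem_filter] at heG
      have : f e = i := (Prod.ext_iff.mp hpe).1.symm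
      exact heG.2 ⟨heG.1, Or.inr (Or.inr (Or.inl this))⟩
    have havoid : ∀ p ∈ pairs', p.1 ≠ i ∧ p.1 ≠ j ∧ p.2 ≠ i ∧ p.2 ≠ j := by
      intro p hp
      obtain ⟨e, heG, hpe⟩ := hp1 _ hp
      simp only [Finset.mem_sdiff, hD, Finset.mem_filter] at heG
      have hni : ¬(e.1 = i ∨ e.1 = j ∨ f e = i ∨ f e = j) := fun h => heG.2 ⟨heG.1, h⟩
      push_neg at hni
      rw [hpe]
      exact ⟨hni.2.2.1, hni.2.2.2, hni.1, hni.2.1⟩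
    refine ⟨insert (i, j) pairs', ?_, ?_, ?_⟩
    · intro p hp
      rcases Finset.mem_insert.mp hp with h | h
      · exact ⟨e0, he0, by rw [h]⟩
      · obtain ⟨e, heG, hpe⟩ := hp1 _ h
        exact ⟨e, Finset.sdiff_subset heG, hpe⟩
    · intro p hp q hq hpq
      rcases Finset.mem_insert.mp hp with h1 | h1 <;>
        rcases Finset.mem_insert.mp hq with h2 | h2
      · exact absurd (h1.trans h2.symm) hpq
      · have := havoid q h2
        rw [h1]
        exact ⟨this.1.symm, this.2.2.1.symm, this.2.1.symm, this.2.2.2.symm⟩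
      · have := havoid p h1
        rw [h2]
        exact ⟨this.1, this.2.1, this.2.2.1, this.2.2.2⟩
      · exact hp2 p h1 q h2 hpq
    · rw [Finset.card_insert_of_notMem hnotin]
      have h1 : G.card = (G \ D).card + D.card := by
        rw [Finset.card_sdiff_of_subset hDsub]
        have := Finset.card_le_card hDsub
        omega
      omega

/-- In every sequence of `t` consecutive 2-changes on a TSP instance with `n` vertices,
the number of disjoint pairs of 2-changes linked by an edge (an edge added in the first
2-change of the pair is removed in the second) is at least `(2t - n)/7`. -/
theorem stmt0 (n t : ℕ)
    (tours : Fin (t + 1) → Finset (Sym2 (Fin n)))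
    (rem add : Fin t → Sym2 (Fin n) × Sym2 (Fin n))
    (hcard : ∀ i, (tours i).card = n)
    (hstep : ∀ i : Fin t,
      (rem i).1 ∈ tours i.castSucc ∧ (rem i).2 ∈ tours i.castSucc ∧ (rem i).1 ≠ (rem i).2 ∧
      (add i).1 ∉ tours i.castSucc ∧ (add i).2 ∉ tours i.castSucc ∧ (add i).1 ≠ (add i).2 ∧
      tours i.succ = (tours i.castSucc \ {(rem i).1, (rem i).2}) ∪ {(add i).1, (add i).2}) :
    ∃ pairs : Finset (Fin t × Fin t),
      (∀ p ∈ pairs, p.1 < p.2 ∧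
        ∃ e, (e = (add p.1).1 ∨ e = (add p.1).2) ∧ (e = (rem p.2).1 ∨ e = (rem p.2).2)) ∧
      (∀ p ∈ pairs, ∀ q ∈ pairs, p ≠ q →
        p.1 ≠ q.1 ∧ p.1 ≠ q.2 ∧ p.2 ≠ q.1 ∧ p.2 ≠ q.2) ∧
      2 * (t : ℤ) - n ≤ 7 * pairs.card := by
  classical
  -- the removed edge of an event
  set re : Fin t × Bool → Sym2 (Fin n) := reEdge rem with hre
  set S : Fin t × Bool → Finset (Fin t) := Sset rem add with hS
  have hre_rem : ∀ e : Fin t × Bool, re e = (rem e.1).1 ∨ re e = (rem e.1).2 := by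
    intro e
    rcases e with ⟨j, s⟩
    cases s
    · right; simp [hre, reEdge]
    · left; simp [hre, reEdge]
  have hre_mem : ∀ e : Fin t × Bool, re e ∈ tours e.1.castSucc := by
    intro e
    rcases hre_rem e with h | h <;> rw [h]
    · exact (hstep e.1).1
    · exact (hstep e.1).2.1
  have hS_mem : ∀ (e : Fin t × Bool) (i : Fin t),
      i ∈ S e ↔ i < e.1 ∧ ((add i).1 = re e ∨ (add i).2 = re e) := by
    intro e i
    simp [hS, Sset, hre]
  -- same step, different slots ⇒ different removed edges
  have hre_inj_step : ∀ e1 e2 : Fin t × Bool, e1.1 = e2.1 → re e1 = re e2 → e1 = e2 := by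
    intro ⟨j1, s1⟩ ⟨j2, s2⟩ hj hre'
    simp only at hj
    subst hj
    by_cases hs : s1 = s2
    · rw [hs]
    · exfalso
      cases s1 <;> cases s2 <;> simp_all [hre, reEdge]
      · exact (hstep j1).2.2.1 hre'.symm
  -- key: two distinct events removing the same edge, with no re-addition, impossible
  -- bad events inject into the initial tour
  set good : Fin t × Bool → Prop := fun e => (S e).Nonempty with hgood
  set goodset : Finset (Fin t × Bool) := Finset.univ.filter (fun e => (S e).Nonempty)
    with hgoodset
  set badset : Finset (Fin t × Bool) := Finset.univ.filter (fun e => ¬ (S e).Nonempty)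
    with hbadset
  have hbad_card : badset.card ≤ n := by
    rw [← hcard 0]
    apply Finset.card_le_card_of_injOn re
    · -- maps into tours 0
      intro e he
      simp only [hbadset, Finset.mem_filter, Finset.mem_univ, true_and,
        Finset.not_nonempty_iff_eq_empty, Finset.mem_coe] at he
      have hnoadd : ∀ i : Fin t, i < e.1 → re e ≠ (add i).1 ∧ re e ≠ (add i).2 := by
        intro i hi
        constructor <;> intro hc <;>
          exact absurd (Finset.eq_empty_iff_forall_notMem.mp he i)
            (by simp [hS_mem, hi, hc.symm])
      refine back_lemma tours rem add hstep (re e) e.1.castSucc (hre_mem e) ?_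
      intro i hi
      refine hnoadd i ?_
      simp only [Fin.le_def, Fin.lt_def, Fin.val_succ, Fin.coe_castSucc] at hi ⊢
      omega
    · -- injective on bad events
      intro e1 he1 e2 he2 heq
      simp only [hbadset, Finset.mem_filter, Finset.mem_univ, true_and,
        Finset.not_nonempty_iff_eq_empty, Finset.mem_coe] at he1 he2
      have key : ∀ a b : Fin t × Bool, a.1 < b.1 → re a = re b → S b = ∅ → False := by
        intro a b hab hr hSb
        refine no_reappear tours rem add hstep (re a) a.1 b.1 hab (hre_rem a)
          (hr ▸ hre_rem b) ?_
        intro i hi1 hi2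
        constructor <;> intro hc <;>
          exact absurd (Finset.eq_empty_iff_forall_notMem.mp hSb i)
            (by simp [hS_mem, hi2, ← hr, hc.symm])
      rcases lt_trichotomy e1.1 e2.1 with h | h | h
      · exact absurd (key e1 e2 h heq he2) (by simp)
      · exact hre_inj_step e1 e2 h heq
      · exact absurd (key e2 e1 h heq.symm he1) (by simp)
  -- the link map: most recent earlier addition
  set f : Fin t × Bool → Fin t := fun e =>
    if h : (S e).Nonempty then (S e).max' h else e.1 with hf
  have hf_mem : ∀ e ∈ goodset, f e ∈ S e := by
    intro e he
    simp only [hgoodset, Finset.mem_filter, Finset.mem_univ, true_and] at he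
    simp only [hf, dif_pos he]
    exact Finset.max'_mem _ he
  have hf_max : ∀ e ∈ goodset, ∀ i ∈ S e, i ≤ f e := by
    intro e he i hi
    simp only [hgoodset, Finset.mem_filter, Finset.mem_univ, true_and] at he
    simp only [hf, dif_pos he]
    exact Finset.le_max' _ i hi
  -- each step is the target of at most 2 good events
  have hf_bound : ∀ k : Fin t, (goodset.filter (fun e => f e = k)).card ≤ 2 := by
    intro k
    have : (2 : ℕ) = (Finset.univ : Finset Bool).card := by simp
    rw [this]
    apply Finset.card_le_card_of_injOn (fun e => decide ((add k).1 = re e))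
    · exact fun _ _ => Finset.mem_univ _
    · intro e1 he1 e2 he2 heq
      simp only [Finset.mem_coe, Finset.mem_filter] at he1 he2
      have hm1 := hf_mem e1 he1.1
      have hm2 := hf_mem e2 he2.1
      rw [he1.2] at hm1
      rw [he2.2] at hm2
      rw [hS_mem] at hm1 hm2
      -- same removed edge
      have hredge : re e1 = re e2 := by
        by_cases hd : (add k).1 = re e1
        · have hd2 : (add k).1 = re e2 := by
            have := heq
            simp only [decide_eq_decide] at this
            exact this.mp hd
          rw [← hd, hd2]
        · have hd2 : ¬ (add k).1 = re e2 := by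
            have := heq
            simp only [decide_eq_decide] at this
            exact fun h => hd (this.mpr h)
          have h1 : (add k).2 = re e1 := hm1.2.resolve_left hd
          have h2 : (add k).2 = re e2 := hm2.2.resolve_left hd2
          rw [← h1, h2]
      have key : ∀ a b : Fin t × Bool, a ∈ goodset → b ∈ goodset →
          f a = k → f b = k → re a = re b → a.1 < b.1 → False := by
        intro a b ha hb hfa hfb hr hab
        refine no_reappear tours rem add hstep (re a) a.1 b.1 hab (hre_rem a)
          (hr ▸ hre_rem b) ?_
        intro i hi1 hi2
        have hka : k < a.1 := by
          have := hf_mem a ha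
          rw [hfa, hS_mem] at this
          exact this.1
        constructor <;> intro hc
        · have : i ∈ S b := by
            rw [hS_mem]
            exact ⟨hi2, Or.inl (by rw [← hr, ← hc])⟩
          have := hf_max b hb i this
          rw [hfb] at this
          exact absurd (lt_of_le_of_lt (le_trans this (le_of_lt hka)) (lt_of_le_of_lt (le_refl _) (lt_of_lt_of_le hab (le_refl _)))) (by
            exact absurd hi1 (not_le.mpr (lt_of_le_of_lt this hka)))
        · have : i ∈ S b := by
            rw [hS_mem]
            exact ⟨hi2, Or.inr (by rw [← hr, ← hc])⟩
          have := hf_max b hb i this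
          rw [hfb] at this
          exact absurd hi1 (not_le.mpr (lt_of_le_of_lt this hka))
      rcases lt_trichotomy e1.1 e2.1 with h | h | h
      · exact absurd (key e1 e2 he1.1 he2.1 he1.2 he2.2 hredge h) (by simp)
      · exact hre_inj_step e1 e2 h hredge
      · exact absurd (key e2 e1 he2.1 he1.1 he2.2 he1.2 hredge.symm h) (by simp)
  -- apply greedy matching
  obtain ⟨pairs, hp1, hp2, hp3⟩ :=
    greedy f goodset hf_bound goodset.card goodset (le_refl _) (Finset.Subset.refl _)
  refine ⟨pairs, ?_, hp2, ?_⟩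
  · intro p hp
    obtain ⟨e, heG, hpe⟩ := hp1 p hp
    have hm := hf_mem e heG
    rw [hS_mem] at hm
    subst hpe
    refine ⟨hm.1, re e, ?_, ?_⟩
    · rcases hm.2 with h | h
      · exact Or.inl h.symm
      · exact Or.inr h.symm
    · rcases hre_rem e with h | h
      · exact Or.inl h
      · exact Or.inr h
  · -- counting
    have htotal : goodset.card + badset.card = 2 * t := by
      rw [hgoodset, hbadset]
      rw [Finset.card_filter_add_card_filter_not]
      simp [Finset.card_univ]
      ring
    have := hbad_card
    have := hp3
    omega
end

section
/- Suppose gadgets G_0,...,G_{n-1} each have states and satisfy: whenever G_i is in state (L,L) (resp. (S,L)) and G_{i+1} is in state (S,S), there is a sequence of 7 consecutive 2-changes leaving G_i in state (S,L) (resp. (S,S)) and G_{i+1} in state (L,L); moreover G_{n-1} can go from (L,L) to (S,S) in 2 steps. Then if G_i is in state (L,L) and all G_j with j > i are in state (S,S), there exists a sequence of exactly 2^{n+3-i} - 14 consecutive 2-changes after which all gadgets G_j with j >= i are in state (S,S). -/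
/-- The three possible gadget states: `(L,L)`, `(S,L)` and `(S,S)`. -/
inductive GState : Type
  | LL : GState
  | SL : GState
  | SS : GState

/-- `Reaches step k c c'` means that `c'` can be obtained from `c` by a sequence of exactly
`k` consecutive steps of the relation `step` (e.g. `k` consecutive 2-changes). -/
def Reaches {C : Type*} (step : C → C → Prop) (k : ℕ) (c c' : C) : Prop :=
  ∃ d : ℕ → C, d 0 = c ∧ d k = c' ∧ ∀ m < k, step (d m) (d (m + 1))

/-
Let `T d` be the number of steps needed to clear gadgets `G_i, …, G_{n-1}` when `i + d + 1 = n`.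
The last gadget clears itself in `T 0 = 2` steps. To clear from `G_i`, move `G_i` from `(L,L)` to
`(S,L)` in 7 steps (which resets `G_{i+1}` to `(L,L)`), clear from `G_{i+1}`, then move `G_i`
to `(S,S)` in 7 more steps and clear from `G_{i+1}` once more. Hence `T (d+1) = 2 (7 + T d)`, whose
solution is `T d = 2^(d+4) - 14`.
-/

theorem Reaches.trans {C : Type*} {step : C → C → Prop} {k m : ℕ} {a b c : C}
    (h₁ : Reaches step k a b) (h₂ : Reaches step m b c) : Reaches step (k + m) a c := by
  obtain ⟨d, rfl, rfl, hd⟩ := h₁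
  obtain ⟨e, he0, rfl, he⟩ := h₂
  refine ⟨fun t => if t ≤ k then d t else e (t - k), by simp, ?_, fun t ht => ?_⟩
  · rcases Nat.eq_zero_or_pos m with rfl | hm
    · simp [he0]
    · simp [show ¬ k + m ≤ k by omega]
  · rcases lt_trichotomy t k with h | rfl | h
    · simpa [h.le, show t + 1 ≤ k by omega] using hd t h
    · simpa [he0] using he 0 (by omega)
    · simpa [show ¬ t ≤ k by omega, show ¬ t + 1 ≤ k by omega,
        show t + 1 - k = t - k + 1 by omega] using he (t - k) (by omega)

section Gadgets

variable {C : Type*} (step : C → C → Prop) (st : C → ℕ → GState) (n : ℕ)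

def ClearsFrom (i T : ℕ) : Prop :=
  ∀ c, st c i = GState.LL → (∀ j, i < j → j < n → st c j = GState.SS) →
    ∃ c', Reaches step T c c' ∧ (∀ j, i ≤ j → j < n → st c' j = GState.SS) ∧
      ∀ j, j < i → st c' j = st c j

variable {step st n}

theorem clearsFrom_last
    (h2 : ∀ c, st c (n - 1) = GState.LL →
      ∃ c', Reaches step 2 c c' ∧ st c' (n - 1) = GState.SS ∧
        ∀ j, j ≠ n - 1 → st c' j = st c j) :
    ClearsFrom step st n (n - 1) 2 := by
  intro c hLL _
  obtain ⟨c', hr, hSS, hrest⟩ := h2 c hLL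
  exact ⟨c', hr, fun j hj₁ hj₂ => by rwa [show j = n - 1 by omega],
    fun j hj => hrest j (by omega)⟩

theorem exists_reaches_move_then_clear {i T : ℕ} {a b : GState} (hin : i + 2 ≤ n)
    (hclear : ClearsFrom step st n (i + 1) T)
    (hmove : ∀ c, st c i = a → st c (i + 1) = GState.SS →
      ∃ c', Reaches step 7 c c' ∧ st c' i = b ∧ st c' (i + 1) = GState.LL ∧
        ∀ j, j ≠ i → j ≠ i + 1 → st c' j = st c j)
    (c : C) (ha : st c i = a) (hSS : ∀ j, i < j → j < n → st c j = GState.SS) :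
    ∃ c', Reaches step (7 + T) c c' ∧ st c' i = b ∧
      (∀ j, i < j → j < n → st c' j = GState.SS) ∧ ∀ j, j < i → st c' j = st c j := by
  obtain ⟨c₁, hr₁, hb₁, hLL₁, hrest₁⟩ := hmove c ha (hSS (i + 1) (by omega) (by omega))
  have hSS₁ : ∀ j, i + 1 < j → j < n → st c₁ j = GState.SS := fun j hj₁ hj₂ => by
    rw [hrest₁ j (by omega) (by omega)]
    exact hSS j (by omega) hj₂
  obtain ⟨c₂, hr₂, hSS₂, hrest₂⟩ := hclear c₁ hLL₁ hSS₁
  refine ⟨c₂, hr₁.trans hr₂, by rw [hrest₂ i (by omega), hb₁],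
    fun j hj₁ hj₂ => hSS₂ j hj₁ hj₂, fun j hj => ?_⟩
  rw [hrest₂ j (by omega), hrest₁ j (by omega) (by omega)]

theorem ClearsFrom.pred {i T : ℕ} (hin : i + 2 ≤ n) (hclear : ClearsFrom step st n (i + 1) T)
    (h7LL : ∀ c, st c i = GState.LL → st c (i + 1) = GState.SS →
      ∃ c', Reaches step 7 c c' ∧ st c' i = GState.SL ∧ st c' (i + 1) = GState.LL ∧
        ∀ j, j ≠ i → j ≠ i + 1 → st c' j = st c j)
    (h7SL : ∀ c, st c i = GState.SL → st c (i + 1) = GState.SS →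
      ∃ c', Reaches step 7 c c' ∧ st c' i = GState.SS ∧ st c' (i + 1) = GState.LL ∧
        ∀ j, j ≠ i → j ≠ i + 1 → st c' j = st c j) :
    ClearsFrom step st n i (7 + T + (7 + T)) := by
  intro c hLL hSS
  obtain ⟨c₁, hr₁, hSL₁, hSS₁, hrest₁⟩ :=
    exists_reaches_move_then_clear hin hclear h7LL c hLL hSS
  obtain ⟨c₂, hr₂, hSS₂i, hSS₂, hrest₂⟩ :=
    exists_reaches_move_then_clear hin hclear h7SL c₁ hSL₁ hSS₁
  refine ⟨c₂, hr₁.trans hr₂, fun j hj₁ hj₂ => ?_, fun j hj => by rw [hrest₂ j hj, hrest₁ j hj]⟩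
  rcases hj₁.eq_or_lt with rfl | hj
  exacts [hSS₂i, hSS₂ j hj hj₂]

theorem two_pow_sub_fourteen_succ (d : ℕ) :
    2 ^ (d + 5) - 14 = 7 + (2 ^ (d + 4) - 14) + (7 + (2 ^ (d + 4) - 14)) := by
  have : 16 ≤ 2 ^ (d + 4) := by
    calc 16 = 2 ^ 4 := by norm_num
      _ ≤ 2 ^ (d + 4) := Nat.pow_le_pow_right (by norm_num) (by omega)
  rw [pow_succ]
  omega

theorem clearsFrom_two_pow
    (h7LL : ∀ i, i + 2 ≤ n → ∀ c, st c i = GState.LL → st c (i + 1) = GState.SS →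
      ∃ c', Reaches step 7 c c' ∧ st c' i = GState.SL ∧ st c' (i + 1) = GState.LL ∧
        ∀ j, j ≠ i → j ≠ i + 1 → st c' j = st c j)
    (h7SL : ∀ i, i + 2 ≤ n → ∀ c, st c i = GState.SL → st c (i + 1) = GState.SS →
      ∃ c', Reaches step 7 c c' ∧ st c' i = GState.SS ∧ st c' (i + 1) = GState.LL ∧
        ∀ j, j ≠ i → j ≠ i + 1 → st c' j = st c j)
    (h2 : ∀ c, st c (n - 1) = GState.LL →
      ∃ c', Reaches step 2 c c' ∧ st c' (n - 1) = GState.SS ∧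
        ∀ j, j ≠ n - 1 → st c' j = st c j)
    (d : ℕ) : ∀ i, i + d + 1 = n → ClearsFrom step st n i (2 ^ (d + 4) - 14) := by
  induction d with
  | zero =>
    intro i hi
    rw [show i = n - 1 by omega]
    exact clearsFrom_last h2
  | succ d ih =>
    intro i hi
    have hin : i + 2 ≤ n := by omega
    rw [two_pow_sub_fourteen_succ]
    exact (ih (i + 1) (by omega)).pred hin (h7LL i hin) (h7SL i hin)

end Gadgets

theorem stmt1_general {C : Type*} (n : ℕ)
    (step : C → C → Prop) (st : C → ℕ → GState)
    (h7LL : ∀ i, i + 2 ≤ n → ∀ c, st c i = GState.LL → st c (i + 1) = GState.SS →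
      ∃ c', Reaches step 7 c c' ∧ st c' i = GState.SL ∧ st c' (i + 1) = GState.LL ∧
        ∀ j, j ≠ i → j ≠ i + 1 → st c' j = st c j)
    (h7SL : ∀ i, i + 2 ≤ n → ∀ c, st c i = GState.SL → st c (i + 1) = GState.SS →
      ∃ c', Reaches step 7 c c' ∧ st c' i = GState.SS ∧ st c' (i + 1) = GState.LL ∧
        ∀ j, j ≠ i → j ≠ i + 1 → st c' j = st c j)
    (h2 : ∀ c, st c (n - 1) = GState.LL →
      ∃ c', Reaches step 2 c c' ∧ st c' (n - 1) = GState.SS ∧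
        ∀ j, j ≠ n - 1 → st c' j = st c j) :
    ∀ i, i < n → ∀ c, st c i = GState.LL → (∀ j, i < j → j < n → st c j = GState.SS) →
      ∃ c', Reaches step (2 ^ (n + 3 - i) - 14) c c' ∧
        (∀ j, i ≤ j → j < n → st c' j = GState.SS) ∧
        ∀ j, j < i → st c' j = st c j := by
  intro i hi
  rw [show n + 3 - i = n - 1 - i + 4 by omega]
  exact clearsFrom_two_pow h7LL h7SL h2 (n - 1 - i) i (by omega)

/-- Suppose gadgets `G_0, …, G_{n-1}` each have states and satisfy: whenever `G_i` is in state
`(L,L)` (resp. `(S,L)`) and `G_{i+1}` is in state `(S,S)`, there is a sequence of 7 consecutive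
2-changes leaving `G_i` in state `(S,L)` (resp. `(S,S)`) and `G_{i+1}` in state `(L,L)` (and all
other gadgets unchanged); moreover `G_{n-1}` can go from `(L,L)` to `(S,S)` in 2 steps. Then if
`G_i` is in state `(L,L)` and all `G_j` with `j > i` are in state `(S,S)`, there exists a
sequence of exactly `2^(n+3-i) - 14` consecutive 2-changes after which all gadgets `G_j` with
`j ≥ i` are in state `(S,S)` (and gadgets `G_j` with `j < i` are unchanged). -/
theorem stmt1 {C : Type*} (n : ℕ) (hn : 1 ≤ n)
    (step : C → C → Prop) (st : C → ℕ → GState)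
    (h7LL : ∀ i, i + 2 ≤ n → ∀ c, st c i = GState.LL → st c (i + 1) = GState.SS →
      ∃ c', Reaches step 7 c c' ∧ st c' i = GState.SL ∧ st c' (i + 1) = GState.LL ∧
        ∀ j, j ≠ i → j ≠ i + 1 → st c' j = st c j)
    (h7SL : ∀ i, i + 2 ≤ n → ∀ c, st c i = GState.SL → st c (i + 1) = GState.SS →
      ∃ c', Reaches step 7 c c' ∧ st c' i = GState.SS ∧ st c' (i + 1) = GState.LL ∧
        ∀ j, j ≠ i → j ≠ i + 1 → st c' j = st c j)
    (h2 : ∀ c, st c (n - 1) = GState.LL →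
      ∃ c', Reaches step 2 c c' ∧ st c' (n - 1) = GState.SS ∧
        ∀ j, j ≠ n - 1 → st c' j = st c j) :
    ∀ i, i < n → ∀ c, st c i = GState.LL → (∀ j, i < j → j < n → st c j = GState.SS) →
      ∃ c', Reaches step (2 ^ (n + 3 - i) - 14) c c' ∧
        (∀ j, i ≤ j → j < n → st c' j = GState.SS) ∧
        ∀ j, j < i → st c' j = st c j :=
  stmt1_general n step st h7LL h7SL h2
end

section
/- Let X^1,...,X^n be independent d-dimensional random vectors with values in [0,1]^d, each having a joint density bounded above by phi >= 1. Let lambda^1,...,lambda^k be linearly independent row vectors in Z^{dn}, and for fixed epsilon >= 0 let A_i be the event that the inner product of lambda^i with the concatenated vector X = (X^1,...,X^n) lies in [0, epsilon]. Then the probability of the intersection of A_1,...,A_k is at most (epsilon * phi)^k. -/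
open MeasureTheory
open scoped ENNReal

namespace Stmt7Aux

open Matrix

universe u




lemma prod_mono {α β : Type*} [MeasurableSpace α] [MeasurableSpace β]
    {μ₁ μ₂ : Measure α} {ν₁ ν₂ : Measure β} [SFinite μ₁] [SFinite μ₂] [SFinite ν₁] [SFinite ν₂]
    (hμ : μ₁ ≤ μ₂) (hν : ν₁ ≤ ν₂) : μ₁.prod ν₁ ≤ μ₂.prod ν₂ := by
  refine Measure.le_iff.2 fun s hs => ?_
  rw [Measure.prod_apply hs, Measure.prod_apply hs]
  exact lintegral_mono' hμ fun x => Measure.le_iff'.1 hν _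

lemma pi_fin_mono (n : ℕ) : ∀ {α : Fin n → Type u} [∀ i, MeasurableSpace (α i)]
    (ν κ : ∀ i, Measure (α i)), (∀ i, IsFiniteMeasure (ν i)) → (∀ i, IsFiniteMeasure (κ i)) →
    (∀ i, ν i ≤ κ i) → Measure.pi ν ≤ Measure.pi κ := by
  induction n with
  | zero =>
    intro α _ ν κ _ _ _
    rw [Measure.pi_of_empty, Measure.pi_of_empty]
  | succ m ih =>
    intro α _ ν κ hν hκ h
    haveI := hν; haveI := hκ
    rw [← ((measurePreserving_piFinSuccAbove ν 0).symm).map_eq,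
        ← ((measurePreserving_piFinSuccAbove κ 0).symm).map_eq]
    exact Measure.map_mono
      (prod_mono (h 0) (ih _ _ (fun j => hν _) (fun j => hκ _) (fun j => h _)))
      (MeasurableEquiv.measurable _)

lemma pi_mono {ι : Type*} [Fintype ι] {α : ι → Type u} [∀ i, MeasurableSpace (α i)]
    (ν κ : ∀ i, Measure (α i)) [hν : ∀ i, IsFiniteMeasure (ν i)]
    [hκ : ∀ i, IsFiniteMeasure (κ i)]
    (h : ∀ i, ν i ≤ κ i) : Measure.pi ν ≤ Measure.pi κ := by
  let e := (Fintype.equivFin ι).symm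
  rw [← (measurePreserving_piCongrLeft ν e).map_eq, ← (measurePreserving_piCongrLeft κ e).map_eq]
  exact Measure.map_mono (pi_fin_mono _ _ _ (fun i => hν _) (fun i => hκ _) fun i => h _)
    (MeasurableEquiv.measurable _)

lemma pi_smul_const {ι : Type*} [Fintype ι] {β : Type*} [MeasurableSpace β]
    (m : Measure β) [IsFiniteMeasure m] (c : ℝ≥0∞) (hc : c ≠ ∞) :
    Measure.pi (fun _ : ι => c • m) = c ^ (Fintype.card ι) • Measure.pi (fun _ : ι => m) := by
  haveI : ∀ _i : ι, IsFiniteMeasure (c • m) := fun _ => by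
    refine ⟨?_⟩
    rw [Measure.smul_apply, smul_eq_mul]
    exact ENNReal.mul_lt_top hc.lt_top (measure_lt_top m _)
  refine Measure.pi_eq fun s hs => ?_
  simp only [Measure.smul_apply, smul_eq_mul, Measure.pi_pi]
  rw [Finset.prod_mul_distrib, Finset.prod_const, Finset.card_univ]

lemma restrict_unit_cube (ι : Type*) [Fintype ι] :
    (volume : Measure (ι → ℝ)).restrict (Set.pi Set.univ fun _ => Set.Icc (0:ℝ) 1)
      = Measure.pi (fun _ : ι => volume.restrict (Set.Icc (0:ℝ) 1)) := by
  haveI : IsProbabilityMeasure ((volume : Measure ℝ).restrict (Set.Icc (0:ℝ) 1)) :=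
    ⟨by rw [Measure.restrict_apply_univ]; simp [Real.volume_Icc]⟩
  refine (Measure.pi_eq fun s hs => ?_).symm
  rw [Measure.restrict_apply (MeasurableSet.univ_pi hs), ← Set.pi_inter_distrib, volume_pi_pi]
  exact Finset.prod_congr rfl fun i _ => (Measure.restrict_apply (hs i)).symm

lemma map_flatten_pi {σ τ : Type*} [Fintype σ] [Fintype τ]
    (m : Measure ℝ) [IsProbabilityMeasure m] :
    Measure.map (fun (w : σ → τ → ℝ) (q : σ × τ) => w q.1 q.2)
        (Measure.pi fun _ : σ => Measure.pi fun _ : τ => m)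
      = Measure.pi (fun _ : σ × τ => m) := by
  have hmeas : Measurable (fun (w : σ → τ → ℝ) (q : σ × τ) => w q.1 q.2) :=
    measurable_pi_lambda _ fun q => (measurable_pi_apply q.2).comp (measurable_pi_apply q.1)
  refine (Measure.pi_eq fun s hs => ?_).symm
  rw [Measure.map_apply hmeas (MeasurableSet.univ_pi hs)]
  have hpre : (fun (w : σ → τ → ℝ) (q : σ × τ) => w q.1 q.2) ⁻¹' (Set.pi Set.univ s)
      = Set.pi Set.univ (fun i : σ => Set.pi Set.univ fun a : τ => s (i, a)) := by
    ext w
    simp only [Set.mem_preimage, Set.mem_pi, Set.mem_univ, forall_true_left, true_implies]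
    exact ⟨fun h i a => h (i, a), fun h q => h q.1 q.2⟩
  rw [hpre, Measure.pi_pi]
  simp_rw [Measure.pi_pi]
  exact (Fintype.prod_prod_type fun q : σ × τ => m (s q)).symm

lemma sum_split {ι κ' : Type*} [Fintype ι] [Fintype κ'] (p : ι → Prop) [DecidablePred p]
    (h : ι × κ' → ℝ) :
    ∑ j : ι × κ', h j
      = (∑ q : {x // p x} × κ', h (q.1.1, q.2)) + ∑ q : {x // ¬ p x} × κ', h (q.1.1, q.2) := by
  rw [Fintype.sum_prod_type, ← Fintype.sum_subtype_add_sum_subtype p (fun i => ∑ a, h (i, a))]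
  rw [Fintype.sum_prod_type, Fintype.sum_prod_type]



lemma exists_good_cols {k : ℕ} {N : Type*} [Fintype N] (lam : Fin k → N → ℤ)
    (hlin : LinearIndependent ℤ lam) :
    ∃ g : Fin k → N, Function.Injective g ∧
      LinearIndependent ℚ (fun r (i : Fin k) => (lam i (g r) : ℚ)) := by
  classical
  let L : (N → ℤ) →ₗ[ℤ] (N → ℚ) :=
    { toFun := fun v j => (v j : ℚ)
      map_add' := fun u v => by funext j; simp
      map_smul' := fun c v => by funext j; simp }
  have hker : LinearMap.ker L = ⊥ := by
    rw [LinearMap.ker_eq_bot']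
    intro v hv
    funext j
    have := congrFun hv j
    simpa [L] using this
  have h1 : LinearIndependent ℤ (⇑L ∘ lam) := hlin.map' L hker
  have h2 : LinearIndependent ℚ (⇑L ∘ lam) := (LinearIndependent.iff_fractionRing ℤ ℚ).1 h1
  set Aq : Matrix (Fin k) N ℚ := fun i j => (lam i j : ℚ) with hAq
  have hAqrows : (fun i => Aq i) = ⇑L ∘ lam := rfl
  have hrank : Aq.rank = k := by
    rw [← Matrix.rank_transpose, Matrix.rank_eq_finrank_span_cols, Matrix.col, Matrix.transpose_transpose]
    have : Set.range Aq = Set.range (⇑L ∘ lam) := by rw [← hAqrows]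
    rw [this, finrank_span_eq_card h2, Fintype.card_fin]
  have hspan : Submodule.span ℚ (Set.range Aqᵀ) = ⊤ := by
    apply Submodule.eq_top_of_finrank_eq
    rw [← Matrix.col, ← Matrix.rank_eq_finrank_span_cols, hrank, Module.finrank_fintype_fun_eq_card,
      Fintype.card_fin]
  obtain ⟨b, hbsub, hbspan, hbind⟩ := exists_linearIndependent ℚ (Set.range Aqᵀ)
  haveI : Fintype b := (Set.Finite.subset (Set.finite_range _) hbsub).fintype
  have hbbasis : Module.Basis b ℚ (Fin k → ℚ) := Module.Basis.mk hbind (by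
    rw [Subtype.range_coe, hbspan, hspan])
  have hcardb : Fintype.card b = k := by
    have h := Module.finrank_eq_card_basis hbbasis
    rw [Module.finrank_fintype_fun_eq_card, Fintype.card_fin] at h
    omega
  let e : Fin k ≃ b := (Fintype.equivFinOfCardEq hcardb).symm
  have hmem : ∀ r : Fin k, ((e r : Fin k → ℚ)) ∈ Set.range Aqᵀ := fun r => hbsub (e r).2
  choose g hg using hmem
  refine ⟨g, ?_, ?_⟩
  · intro a b' hab
    have : (e a : Fin k → ℚ) = (e b' : Fin k → ℚ) := by rw [← hg a, ← hg b', hab]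
    exact e.injective (Subtype.val_injective this)
  · have hfun : (fun r (i : Fin k) => (lam i (g r) : ℚ)) = fun r => ((e r : Fin k → ℚ)) := by
      funext r
      rw [← hg r]
      rfl
    rw [hfun]
    exact hbind.comp e e.injective


end Stmt7Aux
set_option maxHeartbeats 1000000

/-- Let `X^1, …, X^n` be independent `d`-dimensional random vectors with values in `[0,1]^d`,
each having a joint density bounded above by `φ ≥ 1`. Let `λ^1, …, λ^k` be linearly independent
integer row vectors in `ℤ^{dn}`, and for fixed `ε ≥ 0` let `A_i` be the event that the inner
product of `λ^i` with the concatenated vector `X` lies in `[0, ε]`. Then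
`Pr[A_1 ∩ ⋯ ∩ A_k] ≤ (ε φ)^k`. -/
theorem stmt7 {Ω : Type*} [MeasurableSpace Ω] (μ : Measure Ω) [IsProbabilityMeasure μ]
    (n d k : ℕ) (φ ε : ℝ) (hφ : 1 ≤ φ) (hε : 0 ≤ ε)
    (X : Fin n → Ω → (Fin d → ℝ))
    (hmeas : ∀ i, Measurable (X i))
    (hrange : ∀ i ω j, X i ω j ∈ Set.Icc (0 : ℝ) 1)
    (hindep : ProbabilityTheory.iIndepFun X μ)
    (f : Fin n → (Fin d → ℝ) → ℝ≥0∞)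
    (hf : ∀ i x, f i x ≤ ENNReal.ofReal φ)
    (hdens : ∀ i, Measure.map (X i) μ = volume.withDensity (f i))
    (lam : Fin k → (Fin n × Fin d) → ℤ)
    (hlin : LinearIndependent ℤ lam) :
    μ {ω | ∀ i, (∑ j : Fin n × Fin d, (lam i j : ℝ) * X j.1 ω j.2) ∈ Set.Icc 0 ε}
      ≤ ENNReal.ofReal ((ε * φ) ^ k) := by
  classical
  have hφ0 : (0:ℝ) ≤ φ := zero_le_one.trans hφ
  set c : ℝ≥0∞ := ENNReal.ofReal φ with hcdef
  have hcfin : c ≠ ∞ := ENNReal.ofReal_ne_top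
  -- box in ℝ^d
  set box : Set (Fin d → ℝ) := Set.pi Set.univ (fun _ => Set.Icc (0:ℝ) 1) with hboxdef
  have hboxmeas : MeasurableSet box := MeasurableSet.univ_pi fun _ => measurableSet_Icc
  -- laws of the X i
  set ν : Fin n → Measure (Fin d → ℝ) := fun i => Measure.map (X i) μ with hνdef
  haveI hνprob : ∀ i, IsProbabilityMeasure (ν i) := fun i =>
    Measure.isProbabilityMeasure_map (hmeas i).aemeasurable
  -- joint law
  set F : Ω → (Fin n → Fin d → ℝ) := fun ω i => X i ω with hFdef
  have hFmeas : Measurable F := measurable_pi_lambda _ fun i => hmeas i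
  have hlaw : Measure.pi ν = Measure.map F μ := by
    refine Measure.pi_eq fun s hs => ?_
    rw [Measure.map_apply hFmeas (MeasurableSet.univ_pi hs)]
    have hpre : F ⁻¹' Set.pi Set.univ s = ⋂ i ∈ Finset.univ, X i ⁻¹' s i := by
      ext ω
      simp [hFdef, Set.mem_pi]
    rw [hpre, hindep.measure_inter_preimage_eq_mul Finset.univ (fun i _ => hs i)]
    exact Finset.prod_congr rfl fun i _ => (Measure.map_apply (hmeas i) (hs i)).symm
  -- the event
  set S : Set (Fin n → Fin d → ℝ) :=
    {x | ∀ i, (∑ j : Fin n × Fin d, (lam i j : ℝ) * x j.1 j.2) ∈ Set.Icc 0 ε} with hSdef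
  have hsummeas : ∀ (i : Fin k),
      Measurable fun x : Fin n → Fin d → ℝ =>
        ∑ j : Fin n × Fin d, (lam i j : ℝ) * x j.1 j.2 := fun i =>
    Finset.measurable_sum _ fun j _ => by fun_prop
  have hSmeas : MeasurableSet S := by
    have hS2 : S = ⋂ i, (fun x : Fin n → Fin d → ℝ =>
        ∑ j : Fin n × Fin d, (lam i j : ℝ) * x j.1 j.2) ⁻¹' Set.Icc 0 ε := by
      ext x; simp [hSdef]
    rw [hS2]
    exact MeasurableSet.iInter fun i => (hsummeas i) measurableSet_Icc
  have hevent : μ {ω | ∀ i, (∑ j : Fin n × Fin d, (lam i j : ℝ) * X j.1 ω j.2) ∈ Set.Icc 0 ε}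
      = Measure.pi ν S := by
    rw [hlaw, Measure.map_apply hFmeas hSmeas]
    rfl
  rw [hevent]
  -- select columns
  obtain ⟨g, hginj, hgcols⟩ := Stmt7Aux.exists_good_cols lam hlin
  set p : Fin n → Prop := fun i => ∃ r, (g r).1 = i with hpdef
  -- box measure on Fin d → ℝ
  set mbox : Measure (Fin d → ℝ) :=
    Measure.pi (fun _ : Fin d => volume.restrict (Set.Icc (0:ℝ) 1)) with hmboxdef
  haveI hIccprob : IsProbabilityMeasure ((volume : Measure ℝ).restrict (Set.Icc (0:ℝ) 1)) :=
    ⟨by rw [Measure.restrict_apply_univ]; simp [Real.volume_Icc]⟩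
  haveI hmboxprob : IsProbabilityMeasure mbox := by
    rw [hmboxdef]; infer_instance
  have hmbox_eq : (volume : Measure (Fin d → ℝ)).restrict box = mbox :=
    Stmt7Aux.restrict_unit_cube (Fin d)
  -- domination
  haveI hcsmulfin : IsFiniteMeasure (c • mbox) := by
    refine ⟨?_⟩
    rw [Measure.smul_apply, smul_eq_mul]
    exact ENNReal.mul_lt_top hcfin.lt_top (measure_lt_top _ _)
  have hν_le : ∀ i, ν i ≤ c • mbox := by
    intro i
    refine Measure.le_iff.2 fun s hs => ?_
    have hcompl : ν i boxᶜ = 0 := by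
      rw [hνdef]
      simp only
      rw [Measure.map_apply (hmeas i) hboxmeas.compl]
      have hemp : X i ⁻¹' boxᶜ = ∅ := by
        ext ω
        simp only [Set.mem_preimage, Set.mem_compl_iff, Set.mem_empty_iff_false, iff_false,
          not_not, hboxdef, Set.mem_pi, Set.mem_univ, forall_true_left, true_implies]
        exact fun j => hrange i ω j
      rw [hemp, measure_empty]
    have h0 : ν i (s \ box) = 0 :=
      measure_mono_null (fun x hx => hx.2) hcompl
    calc ν i s ≤ ν i (s ∩ box) + ν i (s \ box) := measure_le_inter_add_diff _ _ _
      _ = ν i (s ∩ box) := by rw [h0, add_zero]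
      _ = ∫⁻ x in s ∩ box, f i x ∂volume := by
          rw [hνdef]; simp only
          rw [hdens i, withDensity_apply _ (hs.inter hboxmeas)]
      _ ≤ ∫⁻ _x in s ∩ box, c ∂volume := lintegral_mono fun x => hf i x
      _ = c * volume (s ∩ box) := setLIntegral_const _ _
      _ = (c • mbox) s := by
          rw [← hmbox_eq, Measure.smul_apply, Measure.restrict_apply hs, smul_eq_mul]
  -- dominating product measure
  set κ : Fin n → Measure (Fin d → ℝ) := fun i => if p i then c • mbox else ν i with hκdef
  haveI hκfin : ∀ i, IsFiniteMeasure (κ i) := by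
    intro i
    rw [hκdef]
    simp only
    split <;> infer_instance
  have hmono : Measure.pi ν S ≤ Measure.pi κ S := by
    refine Measure.le_iff'.1 (Stmt7Aux.pi_mono _ _ fun i => ?_) S
    rw [hκdef]; simp only
    split
    · exact hν_le i
    · exact le_rfl
  refine le_trans hmono ?_
  -- split into touched and untouched coordinates
  set E1 := MeasurableEquiv.piEquivPiSubtypeProd (fun _ : Fin n => Fin d → ℝ) p with hE1def
  have MP1 := measurePreserving_piEquivPiSubtypeProd κ p
  have hsplit : Measure.pi κ S
      = ((Measure.pi fun i : Subtype p => κ i).prod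
          (Measure.pi fun i : {i // ¬ p i} => κ i)) (E1.symm ⁻¹' S) := by
    rw [← (MeasurePreserving.symm E1 MP1).map_eq, Measure.map_apply (MeasurableEquiv.measurable _) hSmeas]
  rw [hsplit]
  set t : ℕ := Fintype.card (Subtype p) with htdef
  have hfst : (Measure.pi fun i : Subtype p => κ i)
      = c ^ t • Measure.pi (fun _ : Subtype p => mbox) := by
    have h1 : (fun i : Subtype p => κ i) = fun _ => c • mbox := by
      funext i
      rw [hκdef]; simp only
      rw [if_pos i.2]
    rw [h1, Stmt7Aux.pi_smul_const mbox c hcfin]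
  have hsnd : (Measure.pi fun i : {i // ¬ p i} => κ i)
      = Measure.pi (fun i : {i // ¬ p i} => ν i) := by
    have h1 : (fun i : {i // ¬ p i} => κ i) = fun i : {i // ¬ p i} => ν i := by
      funext i
      rw [hκdef]; simp only
      rw [if_neg i.2]
    rw [h1]
  rw [hfst, hsnd]
  set β : Measure (∀ _i : {i // ¬ p i}, Fin d → ℝ) :=
    Measure.pi (fun i : {i // ¬ p i} => ν i) with hβdef
  haveI hβprob : IsProbabilityMeasure β := by rw [hβdef]; infer_instance
  set mboxpi : Measure (∀ _i : Subtype p, Fin d → ℝ) :=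
    Measure.pi (fun _ : Subtype p => mbox) with hmboxpidef
  haveI hmboxpiprob : IsProbabilityMeasure mboxpi := by rw [hmboxpidef]; infer_instance
  haveI : IsFiniteMeasure ((c ^ t) • mboxpi) := by
    refine ⟨?_⟩
    rw [Measure.smul_apply, smul_eq_mul]
    exact ENNReal.mul_lt_top (ENNReal.pow_ne_top hcfin).lt_top (measure_lt_top _ _)
  -- key slice bound
  have hslice : ∀ z : ∀ _i : {i // ¬ p i}, Fin d → ℝ,
      mboxpi ((fun w => (w, z)) ⁻¹' (E1.symm ⁻¹' S)) ≤ ENNReal.ofReal (ε ^ k) := by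
    intro z
    set emb : (Subtype p × Fin d) → Fin n × Fin d := fun q => (q.1.1, q.2) with hembdef
    set C : Fin k → ℝ :=
      fun i => ∑ q : {i // ¬ p i} × Fin d, (lam i (q.1.1, q.2) : ℝ) * z q.1 q.2 with hCdef
    set Fz : Set ((Subtype p × Fin d) → ℝ) :=
      {v | ∀ i, (∑ q : Subtype p × Fin d, (lam i (emb q) : ℝ) * v q) + C i ∈ Set.Icc (0:ℝ) ε} with hFzdef
    set flatten : (∀ _i : Subtype p, Fin d → ℝ) → ((Subtype p × Fin d) → ℝ) := fun w q => w q.1 q.2 with hflatdef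
    have hflatmeas : Measurable flatten :=
      measurable_pi_lambda _ fun q => (measurable_pi_apply q.2).comp (measurable_pi_apply q.1)
    have hFzmeas : MeasurableSet Fz := by
      have h2 : Fz = ⋂ i, (fun v : (Subtype p × Fin d) → ℝ =>
          (∑ q : Subtype p × Fin d, (lam i (emb q) : ℝ) * v q) + C i) ⁻¹' Set.Icc (0:ℝ) ε := by
        ext v; simp [hFzdef]
      rw [h2]
      refine MeasurableSet.iInter fun i => ?_
      have hm : Measurable fun v : (Subtype p × Fin d) → ℝ =>
          (∑ q : Subtype p × Fin d, (lam i (emb q) : ℝ) * v q) + C i := by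
        apply Measurable.add_const
        exact Finset.measurable_sum _ fun q _ => by fun_prop
      exact hm measurableSet_Icc
    have hpre : (fun w => (w, z)) ⁻¹' (E1.symm ⁻¹' S) = flatten ⁻¹' Fz := by
      ext w
      simp only [Set.mem_preimage, hSdef, Set.mem_setOf_eq, hFzdef, hflatdef]
      refine forall_congr' fun i => ?_
      have hsum : (∑ j : Fin n × Fin d, (lam i j : ℝ) * (E1.symm (w, z)) j.1 j.2)
          = (∑ q : Subtype p × Fin d, (lam i (emb q) : ℝ) * w q.1 q.2) + C i := by
        rw [Stmt7Aux.sum_split p (fun j => (lam i j : ℝ) * (E1.symm (w, z)) j.1 j.2)]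
        congr 1
        · refine Finset.sum_congr rfl fun q _ => ?_
          have hx : (E1.symm (w, z)) q.1.1 q.2 = w q.1 q.2 := by
            rw [hE1def]
            simp [MeasurableEquiv.piEquivPiSubtypeProd_symm_apply, dif_pos q.1.2]
          rw [hx]
        · refine Finset.sum_congr rfl fun q _ => ?_
          have hx : (E1.symm (w, z)) q.1.1 q.2 = z q.1 q.2 := by
            rw [hE1def]
            simp [MeasurableEquiv.piEquivPiSubtypeProd_symm_apply, dif_neg q.1.2]
          rw [hx]
      rw [hsum]
    have hflat : mboxpi (flatten ⁻¹' Fz)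
        = Measure.pi (fun _ : Subtype p × Fin d => (volume : Measure ℝ).restrict (Set.Icc (0:ℝ) 1)) Fz := by
      have hmb : mboxpi = Measure.pi (fun _ : Subtype p =>
          Measure.pi fun _ : Fin d => (volume : Measure ℝ).restrict (Set.Icc (0:ℝ) 1)) := by
        rw [hmboxpidef, hmboxdef]
      rw [hmb, ← Stmt7Aux.map_flatten_pi (σ := Subtype p) (τ := Fin d)
        ((volume : Measure ℝ).restrict (Set.Icc (0:ℝ) 1)),
        Measure.map_apply hflatmeas hFzmeas]
    set bigbox : Set ((Subtype p × Fin d) → ℝ) := Set.pi Set.univ (fun _ => Set.Icc (0:ℝ) 1) with hbigboxdef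
    have hrestr : Measure.pi (fun _ : Subtype p × Fin d => (volume : Measure ℝ).restrict (Set.Icc (0:ℝ) 1)) Fz
        = volume (Fz ∩ bigbox) := by
      rw [← Stmt7Aux.restrict_unit_cube (Subtype p × Fin d), Measure.restrict_apply hFzmeas]
    set gh : Fin k → Subtype p × Fin d := fun r => (⟨(g r).1, ⟨r, rfl⟩⟩, (g r).2) with hghdef
    have hembgh : ∀ r, emb (gh r) = g r := fun r => rfl
    have hghinj : Function.Injective gh := fun a b hab =>
      hginj (by rw [← hembgh a, ← hembgh b, hab])
    set P' : (Subtype p × Fin d) → Prop := fun q => ∃ s, gh s = q with hP'def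
    set A : Matrix (Subtype p × Fin d) (Subtype p × Fin d) ℤ := Matrix.of fun q r =>
      if hq : P' q then lam hq.choose (emb r) else if q = r then 1 else 0 with hAdef
    have hA₁ : ∀ s r, A (gh s) r = lam s (emb r) := by
      intro s r
      have hq : P' (gh s) := ⟨s, rfl⟩
      have hchoose : hq.choose = s := hghinj hq.choose_spec
      rw [hAdef]
      simp only [Matrix.of_apply]
      rw [dif_pos hq, hchoose]
    have hA₂ : ∀ q r, ¬ P' q → A q r = if q = r then 1 else 0 := by
      intro q r hq
      rw [hAdef]; simp only [Matrix.of_apply]; rw [dif_neg hq]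
    have hdetA : A.det ≠ 0 := by
      intro hdet
      obtain ⟨v, hv0, hmv⟩ := Matrix.exists_mulVec_eq_zero_iff.2 hdet
      have hoff : ∀ q, ¬ P' q → v q = 0 := by
        intro q hq
        have h1 : ∑ r, A q r * v r = 0 := by
          have h0 := congrFun hmv q
          simpa [Matrix.mulVec, dotProduct] using h0
        have h2 : ∀ r, A q r * v r = if q = r then v r else 0 := by
          intro r; rw [hA₂ q r hq]; split <;> simp
        rw [Finset.sum_congr rfl fun r _ => h2 r] at h1
        simpa [Finset.sum_ite_eq] using h1
      have hZ : ∀ s, (∑ t' : Fin k, lam s (g t') * v (gh t')) = 0 := by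
        intro s
        have h1 : ∑ r, A (gh s) r * v r = 0 := by
          have h0 := congrFun hmv (gh s)
          simpa [Matrix.mulVec, dotProduct] using h0
        rw [Finset.sum_congr rfl fun r _ => by rw [hA₁ s r]] at h1
        have h3 : (∑ r : Subtype p × Fin d, lam s (emb r) * v r)
            = ∑ r ∈ Finset.univ.image gh, lam s (emb r) * v r := by
          refine (Finset.sum_subset (Finset.subset_univ _) ?_).symm
          intro q _ hq
          have hnp : ¬ P' q := by
            intro hc
            exact hq (Finset.mem_image.2 ⟨hc.choose, Finset.mem_univ _, hc.choose_spec⟩)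
          rw [hoff q hnp, mul_zero]
        rw [h3, Finset.sum_image fun a _ b _ hab => hghinj hab] at h1
        simpa [hembgh] using h1
      have hcast : ∀ t', v (gh t') = 0 := by
        have hrel : (∑ t' : Fin k, (v (gh t') : ℚ) • (fun i : Fin k => (lam i (g t') : ℚ))) = 0 := by
          funext i
          simp only [Finset.sum_apply, Pi.smul_apply, smul_eq_mul, Pi.zero_apply]
          have h5 : (∑ t' : Fin k, lam i (g t') * v (gh t')) = 0 := hZ i
          have h6 : (∑ t' : Fin k, (v (gh t') : ℚ) * (lam i (g t') : ℚ))
              = ((∑ t' : Fin k, lam i (g t') * v (gh t') : ℤ) : ℚ) := by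
            push_cast
            exact Finset.sum_congr rfl fun t' _ => mul_comm _ _
          rw [h6, h5, Int.cast_zero]
        have happly := Fintype.linearIndependent_iff.1 hgcols (fun t' => (v (gh t') : ℚ)) hrel
        intro t'
        have h8 : ((v (gh t') : ℚ)) = 0 := happly t'
        exact_mod_cast h8
      refine hv0 (funext fun q => ?_)
      by_cases hq : P' q
      · obtain ⟨s, rfl⟩ := hq
        simpa using hcast s
      · simpa using hoff q hq
    set Ar : Matrix (Subtype p × Fin d) (Subtype p × Fin d) ℝ := (Int.castRingHom ℝ).mapMatrix A with hArdef
    have hdetAr : Ar.det = ((A.det : ℤ) : ℝ) := by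
      rw [hArdef, ← RingHom.map_det]
      rfl
    set Φ : ((Subtype p × Fin d) → ℝ) →ₗ[ℝ] ((Subtype p × Fin d) → ℝ) := Matrix.toLin' Ar with hΦdef
    have hdetΦ : LinearMap.det Φ = ((A.det : ℤ) : ℝ) := by
      rw [hΦdef, LinearMap.det_toLin', hdetAr]
    have hdetΦ0 : LinearMap.det Φ ≠ 0 := by
      rw [hdetΦ]
      exact_mod_cast hdetA
    set I : (Subtype p × Fin d) → Set ℝ := fun q =>
      if hq : P' q then Set.Icc (-(C hq.choose)) (ε - C hq.choose) else Set.Icc 0 1 with hIdef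
    have hsub : Fz ∩ bigbox ⊆ Φ ⁻¹' (Set.pi Set.univ I) := by
      rintro v ⟨hvF, hvbox⟩
      rw [Set.mem_preimage, Set.mem_univ_pi]
      intro q
      have hΦv : Φ v q = ∑ r, ((A q r : ℤ) : ℝ) * v r := by
        rw [hΦdef, Matrix.toLin'_apply]
        simp [Matrix.mulVec, dotProduct, hArdef]
      by_cases hq : P' q
      · rw [hIdef]
        simp only
        rw [dif_pos hq]
        have hvi := hvF hq.choose
        rw [hΦv]
        have h7 : (∑ r, ((A q r : ℤ) : ℝ) * v r)
            = ∑ r, (lam hq.choose (emb r) : ℝ) * v r := by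
          refine Finset.sum_congr rfl fun r _ => ?_
          rw [hAdef]
          simp only [Matrix.of_apply]
          rw [dif_pos hq]
        rw [h7]
        obtain ⟨hl, hr⟩ := hvi
        constructor <;> linarith
      · rw [hIdef]
        simp only
        rw [dif_neg hq, hΦv]
        have h7 : (∑ r, ((A q r : ℤ) : ℝ) * v r) = v q := by
          have h2 : ∀ r, ((A q r : ℤ) : ℝ) * v r = if q = r then v r else 0 := by
            intro r; rw [hA₂ q r hq]; split <;> simp
          rw [Finset.sum_congr rfl fun r _ => h2 r]
          simp [Finset.sum_ite_eq]
        rw [h7]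
        exact Set.mem_univ_pi.1 hvbox q
    have hvolI : volume (Set.pi Set.univ I) = ENNReal.ofReal (ε ^ k) := by
      rw [volume_pi_pi]
      have hIq : ∀ q, volume (I q) = if P' q then ENNReal.ofReal ε else 1 := by
        intro q
        by_cases hq : P' q
        · have hIq2 : I q = Set.Icc (-(C hq.choose)) (ε - C hq.choose) := by
            simp only [hIdef]
            exact dif_pos hq
          rw [hIq2, if_pos hq, Real.volume_Icc]
          congr 1
          ring
        · have hIq2 : I q = Set.Icc 0 1 := by
            simp only [hIdef]
            exact dif_neg hq
          rw [hIq2, if_neg hq, Real.volume_Icc]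
          norm_num
      rw [Finset.prod_congr rfl fun q _ => hIq q, Finset.prod_ite, Finset.prod_const,
        Finset.prod_const, one_pow, mul_one]
      have hfilter : Finset.univ.filter P' = Finset.univ.image gh := by
        ext q
        simp [hP'def]
      rw [hfilter, Finset.card_image_of_injective _ hghinj]
      rw [← ENNReal.ofReal_pow hε]
      simp
    rw [hpre, hflat, hrestr]
    calc volume (Fz ∩ bigbox) ≤ volume (Φ ⁻¹' Set.pi Set.univ I) := measure_mono hsub
      _ = ENNReal.ofReal |(LinearMap.det Φ)⁻¹| * volume (Set.pi Set.univ I) :=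
          Measure.addHaar_preimage_linearMap volume hdetΦ0 _
      _ ≤ 1 * ENNReal.ofReal (ε ^ k) := by
          rw [hvolI]
          refine mul_le_mul_left ?_ _
          refine ENNReal.ofReal_le_one.2 ?_
          rw [hdetΦ, abs_inv]
          refine inv_le_one_of_one_le₀ ?_
          exact_mod_cast Int.one_le_abs hdetA
      _ = ENNReal.ofReal (ε ^ k) := one_mul _

  -- put everything together
  have happ : (((c ^ t) • mboxpi).prod β) (E1.symm ⁻¹' S)
      ≤ c ^ t * ENNReal.ofReal (ε ^ k) := by
    rw [Measure.prod_apply_symm ((MeasurableEquiv.measurable _) hSmeas)]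
    calc ∫⁻ z, ((c ^ t) • mboxpi) ((fun w => (w, z)) ⁻¹' (E1.symm ⁻¹' S)) ∂β
        ≤ ∫⁻ _z, c ^ t * ENNReal.ofReal (ε ^ k) ∂β := by
          refine lintegral_mono fun z => ?_
          rw [Measure.smul_apply, smul_eq_mul]
          exact mul_le_mul_right (hslice z) _
      _ = c ^ t * ENNReal.ofReal (ε ^ k) := by
          rw [lintegral_const, measure_univ, mul_one]
  refine le_trans happ ?_
  -- final arithmetic
  have htk : t ≤ k := by
    have himg : Finset.univ.filter p = Finset.univ.image (fun r => (g r).1) := by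
      ext i
      simp [hpdef, eq_comm]
    rw [htdef, Fintype.card_subtype]
    calc (Finset.univ.filter p).card
        = (Finset.univ.image (fun r => (g r).1)).card := by rw [himg]
      _ ≤ (Finset.univ : Finset (Fin k)).card := Finset.card_image_le
      _ = k := by simp
  have hct : c ^ t ≤ ENNReal.ofReal (φ ^ k) := by
    rw [hcdef, ← ENNReal.ofReal_pow hφ0]
    exact ENNReal.ofReal_le_ofReal (pow_le_pow_right₀ hφ htk)
  calc c ^ t * ENNReal.ofReal (ε ^ k) ≤ ENNReal.ofReal (φ ^ k) * ENNReal.ofReal (ε ^ k) :=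
        mul_le_mul_left hct _
    _ = ENNReal.ofReal (φ ^ k * ε ^ k) := (ENNReal.ofReal_mul (pow_nonneg hφ0 k)).symm
    _ = ENNReal.ofReal ((ε * φ) ^ k) := by rw [mul_pow]; ring_nf
end

section
/- Let O be the origin in R^d, P = (0,...,0,tau) with 0 < tau <= sqrt(d), and let Q be a point at distance r from O, 0 < r <= sqrt(d), where the angle alpha between the segment OQ and the segment OP is uniformly distributed on [0, pi). Define Z = r - sqrt(r^2 + tau^2 - 2*r*tau*cos(alpha)). Then Z takes values only in [-tau, min(tau, 2r - tau)], and for z in the open interval (-tau, min(tau, 2r - tau)) the density of Z satisfies f(z) <= sqrt(2/(tau^2 - z^2)) if r >= tau, and f(z) <= sqrt(2/((tau + z)(2r - tau - z))) if r < tau. -/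
open MeasureTheory
open scoped ENNReal

private lemma volume_image_eq_lintegral_abs_deriv {s : Set ℝ} {f f' : ℝ → ℝ}
    (hs : MeasurableSet s) (hf' : ∀ x ∈ s, HasDerivWithinAt f (f' x) s x)
    (hf : Set.InjOn f s) :
    volume (f '' s) = ∫⁻ x in s, ENNReal.ofReal |f' x| := by
  have h := MeasureTheory.lintegral_image_eq_lintegral_abs_det_fderiv_mul volume hs
    (fun x hx => (hf' x hx).hasFDerivWithinAt) hf (fun _ => (1 : ℝ≥0∞))
  simpa [ContinuousLinearMap.det_toSpanSingleton, mul_one, setLIntegral_one] using h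

set_option maxHeartbeats 2000000 in
/-- Let `O` be the origin in `ℝ^d`, `P = (0,…,0,τ)` with `0 < τ ≤ √d`, and let `Q` be a point
at distance `r` from `O`, `0 < r ≤ √d`, where the angle `α` between `OQ` and `OP` is uniformly
distributed on `[0, π)`. Define `Z = r - √(r² + τ² - 2rτ cos α)` (that is,
`Z = dist(O,Q) - dist(P,Q)`). Then `Z` takes values only in `[-τ, min τ (2r - τ)]`, and on the
open interval `(-τ, min τ (2r - τ))` the density of `Z` is at most `√(2/(τ² - z²))` if `r ≥ τ`
and at most `√(2/((τ + z)(2r - τ - z)))` if `r < τ`; the density vanishes outside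
`[-τ, min τ (2r - τ)]`. -/
theorem stmt9 (d : ℕ) (hd : 2 ≤ d) (τ r : ℝ)
    (hτ : 0 < τ) (hτd : τ ≤ Real.sqrt d) (hr : 0 < r) (hrd : r ≤ Real.sqrt d) :
    (∀ α ∈ Set.Ico (0 : ℝ) Real.pi,
      r - Real.sqrt (r ^ 2 + τ ^ 2 - 2 * r * τ * Real.cos α)
        ∈ Set.Icc (-τ) (min τ (2 * r - τ))) ∧
    ∃ f : ℝ → ℝ≥0∞,
      Measure.map (fun α : ℝ => r - Real.sqrt (r ^ 2 + τ ^ 2 - 2 * r * τ * Real.cos α))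
          ((ENNReal.ofReal Real.pi)⁻¹ • volume.restrict (Set.Ico 0 Real.pi))
        = volume.withDensity f ∧
      (∀ z ∈ Set.Ioo (-τ) (min τ (2 * r - τ)),
        (τ ≤ r → f z ≤ ENNReal.ofReal (Real.sqrt (2 / (τ ^ 2 - z ^ 2)))) ∧
        (r < τ → f z ≤ ENNReal.ofReal (Real.sqrt (2 / ((τ + z) * (2 * r - τ - z)))))) ∧
      ∀ z, z ∉ Set.Icc (-τ) (min τ (2 * r - τ)) → f z = 0 := by
  have hπ := Real.pi_pos
  set m := min τ (2 * r - τ) with hm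
  set T : ℝ → ℝ := fun α => r - Real.sqrt (r ^ 2 + τ ^ 2 - 2 * r * τ * Real.cos α) with hT
  have hmτ : m ≤ τ := min_le_left _ _
  have hmr2 : m ≤ 2 * r - τ := min_le_right _ _
  have hmneg : -τ < m := lt_min (by linarith) (by linarith)
  have hmr : m ≤ r := by
    rcases le_total τ r with h | h
    · exact le_trans hmτ h
    · exact le_trans hmr2 (by linarith)
  have hrt : (0:ℝ) < 2 * r * τ := by positivity
  have habs : r - |r - τ| = m := by
    rcases le_total τ r with h | h
    · rw [abs_of_nonneg (by linarith), hm, min_eq_left (by linarith)]; ring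
    · rw [abs_of_nonpos (by linarith), hm, min_eq_right (by linarith)]; ring
  -- Part 1
  have part1 : ∀ α ∈ Set.Ico (0:ℝ) Real.pi, T α ∈ Set.Icc (-τ) m := by
    intro α hα
    have hc1 : Real.cos α ≤ 1 := Real.cos_le_one α
    have hc2 : -1 ≤ Real.cos α := Real.neg_one_le_cos α
    constructor
    · have h1 : Real.sqrt (r ^ 2 + τ ^ 2 - 2 * r * τ * Real.cos α) ≤ r + τ := by
        rw [show r + τ = Real.sqrt ((r+τ)^2) from (Real.sqrt_sq (by linarith)).symm]
        exact Real.sqrt_le_sqrt (by nlinarith)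
      show -τ ≤ r - _
      linarith
    · have h1 : |r - τ| ≤ Real.sqrt (r ^ 2 + τ ^ 2 - 2 * r * τ * Real.cos α) := by
        rw [show |r - τ| = Real.sqrt ((r-τ)^2) from (Real.sqrt_sq_eq_abs _).symm]
        exact Real.sqrt_le_sqrt (by nlinarith)
      show r - _ ≤ m
      linarith [habs]
  refine ⟨part1, ?_⟩
  -- the inverse function and its derivative
  set ψ : ℝ → ℝ := fun z => (τ^2 + 2*r*z - z^2) / (2*r*τ) with hψ
  set A₀ : ℝ → ℝ := fun z => Real.arccos (ψ z) with hA₀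
  set D : ℝ → ℝ := fun z => -(1 / Real.sqrt (1 - ψ z ^ 2)) * ((2*r*1 - 2*z) / (2*r*τ)) with hD
  have hψrange : ∀ z ∈ Set.Ioo (-τ) m, -1 < ψ z ∧ ψ z < 1 := by
    intro z hz
    have hA : 0 < τ - z := by linarith [hz.2, hmτ]
    have hB : 0 < τ + z := by linarith [hz.1]
    have hC : 0 < 2*r - τ - z := by linarith [hz.2, hmr2]
    have hDD : 0 < 2*r + τ - z := by linarith
    constructor
    · rw [hψ]; dsimp only; rw [lt_div_iff₀ hrt]; nlinarith
    · rw [hψ]; dsimp only; rw [div_lt_one hrt]; nlinarith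
  have hψT : ∀ α ∈ Set.Ioo (0:ℝ) Real.pi, T α ∈ Set.Ioo (-τ) m ∧ A₀ (T α) = α := by
    intro α hα
    have hc1 : Real.cos α < 1 := by
      have h := Real.cos_lt_cos_of_nonneg_of_le_pi le_rfl hα.2.le hα.1
      simpa using h
    have hc2 : -1 < Real.cos α := by
      have h := Real.cos_lt_cos_of_nonneg_of_le_pi hα.1.le le_rfl hα.2
      rwa [Real.cos_pi] at h
    set w := r ^ 2 + τ ^ 2 - 2 * r * τ * Real.cos α with hw
    have hw1 : (r - τ)^2 < w := by nlinarith
    have hw2 : w < (r + τ)^2 := by nlinarith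
    have hw0 : 0 ≤ w := le_trans (sq_nonneg _) hw1.le
    have hs2 : Real.sqrt w ^ 2 = w := Real.sq_sqrt hw0
    have hsl : |r - τ| < Real.sqrt w := by
      rw [← Real.sqrt_sq_eq_abs]
      exact Real.sqrt_lt_sqrt (sq_nonneg _) hw1
    have hsu : Real.sqrt w < r + τ := by
      rw [← Real.sqrt_sq (show (0:ℝ) ≤ r + τ by linarith)]
      exact Real.sqrt_lt_sqrt hw0 hw2
    have hTα : T α = r - Real.sqrt w := rfl
    have hTmem : T α ∈ Set.Ioo (-τ) m := by
      rw [hTα]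
      exact ⟨by linarith, by linarith [habs, abs_nonneg (r - τ)]⟩
    refine ⟨hTmem, ?_⟩
    have hψeq : ψ (T α) = Real.cos α := by
      rw [hTα, hψ]
      dsimp only
      rw [div_eq_iff (ne_of_gt hrt)]
      nlinarith [hs2]
    rw [hA₀]
    dsimp only
    rw [hψeq, Real.arccos_cos hα.1.le hα.2.le]
  have hTψ : ∀ z ∈ Set.Ioo (-τ) m, A₀ z ∈ Set.Ioo 0 Real.pi ∧ T (A₀ z) = z := by
    intro z hz
    obtain ⟨h2, h1⟩ := hψrange z hz
    have hrz : 0 < r - z := by linarith [hz.2, hmr]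
    have hmem : A₀ z ∈ Set.Ioo 0 Real.pi := by
      constructor
      · exact Real.arccos_pos.2 h1
      · exact lt_of_le_of_ne (Real.arccos_le_pi _)
          (fun he => absurd (Real.arccos_eq_pi.1 he) (by linarith))
    refine ⟨hmem, ?_⟩
    have hcos : Real.cos (A₀ z) = ψ z := Real.cos_arccos h2.le h1.le
    have hwz : r ^ 2 + τ ^ 2 - 2 * r * τ * ψ z = (r - z)^2 := by
      rw [hψ]; dsimp only; field_simp; ring
    show r - Real.sqrt (r ^ 2 + τ ^ 2 - 2 * r * τ * Real.cos (A₀ z)) = z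
    rw [hcos, hwz, Real.sqrt_sq hrz.le]
    ring
  have hderiv : ∀ z ∈ Set.Ioo (-τ) m, HasDerivAt A₀ (D z) z := by
    intro z hz
    obtain ⟨h2, h1⟩ := hψrange z hz
    have hinner : HasDerivAt ψ ((2*r*1 - 2*z) / (2*r*τ)) z := by
      have hp : HasDerivAt (fun z : ℝ => z^2) (2*z) z := by
        simpa using hasDerivAt_pow 2 z
      have h0 : HasDerivAt (fun z : ℝ => τ^2 + 2*r*z - z^2) (2*r*1 - 2*z) z :=
        ((((hasDerivAt_id' (x := z)).const_mul (2*r))).const_add (τ^2)).sub hp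
      exact h0.div_const _
    have houter := Real.hasDerivAt_arccos (ne_of_gt h2) (ne_of_lt h1)
    have := houter.comp z hinner
    exact this
  have hTcont : Continuous T := by
    rw [hT]; fun_prop
  -- the density
  refine ⟨fun z => Set.indicator (Set.Ioo (-τ) m)
      (fun z => (ENNReal.ofReal Real.pi)⁻¹ * ENNReal.ofReal |D z|) z, ?_, ?_, ?_⟩
  · -- measure equality
    ext A hA
    rw [Measure.map_apply hTcont.measurable hA, Measure.smul_apply, smul_eq_mul,
        Measure.restrict_apply (hTcont.measurable hA)]
    have hIco : volume (T ⁻¹' A ∩ Set.Ico 0 Real.pi)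
        = volume (T ⁻¹' A ∩ Set.Ioo 0 Real.pi) := by
      apply le_antisymm
      · calc volume (T ⁻¹' A ∩ Set.Ico 0 Real.pi)
            ≤ volume ((T ⁻¹' A ∩ Set.Ioo 0 Real.pi) ∪ {0}) := by
              apply measure_mono
              rintro x ⟨hx1, hx2, hx3⟩
              rcases eq_or_lt_of_le hx2 with he | hlt
              · right; simp [← he]
              · left; exact ⟨hx1, hlt, hx3⟩
          _ ≤ volume (T ⁻¹' A ∩ Set.Ioo 0 Real.pi) + volume ({0} : Set ℝ) :=
              measure_union_le _ _
          _ = volume (T ⁻¹' A ∩ Set.Ioo 0 Real.pi) := by simp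
      · exact measure_mono (Set.inter_subset_inter_right _ Set.Ioo_subset_Ico_self)
    rw [hIco]
    have hset : T ⁻¹' A ∩ Set.Ioo 0 Real.pi = A₀ '' (A ∩ Set.Ioo (-τ) m) := by
      ext α
      constructor
      · rintro ⟨h1, h2⟩
        obtain ⟨hmem, heq⟩ := hψT α h2
        exact ⟨T α, ⟨h1, hmem⟩, heq⟩
      · rintro ⟨z, ⟨hz1, hz2⟩, rfl⟩
        obtain ⟨hmem, heq⟩ := hTψ z hz2
        refine ⟨?_, hmem⟩
        show T (A₀ z) ∈ A
        rw [heq]; exact hz1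
    rw [hset]
    have hAm : MeasurableSet (A ∩ Set.Ioo (-τ) m) := hA.inter measurableSet_Ioo
    rw [volume_image_eq_lintegral_abs_deriv hAm
        (fun z hz => (hderiv z hz.2).hasDerivWithinAt)
        (fun z1 h1 z2 h2 he => by
          have e1 := (hTψ z1 h1.2).2
          have e2 := (hTψ z2 h2.2).2
          rw [← e1, ← e2, he])]
    rw [withDensity_apply _ hA]
    rw [lintegral_indicator measurableSet_Ioo]
    rw [Measure.restrict_restrict measurableSet_Ioo, Set.inter_comm]
    rw [lintegral_const_mul' _ _ (ENNReal.inv_ne_top.2 (ENNReal.ofReal_pos.2 hπ).ne')]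
  · -- bounds
    intro z hz
    have hzIoo : z ∈ Set.Ioo (-τ) m := hz
    have hA : 0 < τ - z := by linarith [hzIoo.2, hmτ]
    have hB : 0 < τ + z := by linarith [hzIoo.1]
    have hC : 0 < 2*r - τ - z := by linarith [hzIoo.2, hmr2]
    have hDD : 0 < 2*r + τ - z := by linarith
    have hrz : 0 < r - z := by linarith [hzIoo.2, hmr]
    obtain ⟨h2, h1⟩ := hψrange z hzIoo
    set P := (τ - z) * (τ + z) * ((2*r - τ - z) * (2*r + τ - z)) with hP
    have hPpos : 0 < P := by positivity
    have hkey : 1 - ψ z ^ 2 = P / (2*r*τ)^2 := by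
      rw [hψ, hP]; dsimp only; field_simp; ring
    have hsP : Real.sqrt (1 - ψ z ^ 2) = Real.sqrt P / (2*r*τ) := by
      rw [hkey, Real.sqrt_div hPpos.le, Real.sqrt_sq hrt.le]
    have hsPpos : 0 < Real.sqrt P := Real.sqrt_pos.2 hPpos
    have hDabs : |D z| = 2*(r - z) / Real.sqrt P := by
      have hDz : D z = -(2*(r - z) / Real.sqrt P) := by
        rw [hD]
        dsimp only
        rw [hsP]
        field_simp
      rw [hDz, abs_neg, abs_of_nonneg (by positivity)]
    have hfz : Set.indicator (Set.Ioo (-τ) m)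
        (fun z => (ENNReal.ofReal Real.pi)⁻¹ * ENNReal.ofReal |D z|) z
        = ENNReal.ofReal ((2*(r - z) / Real.sqrt P) / Real.pi) := by
      rw [Set.indicator_of_mem hzIoo, hDabs,
          ENNReal.ofReal_div_of_pos hπ, ENNReal.div_eq_inv_mul]
    have hsqrt2 : (1:ℝ) ≤ Real.sqrt 2 := by
      rw [show (1:ℝ) = Real.sqrt 1 by simp]
      exact Real.sqrt_le_sqrt (by norm_num)
    have h2pi : (2:ℝ) ≤ Real.sqrt 2 * Real.pi := by
      nlinarith [Real.pi_gt_three, Real.sqrt_nonneg 2]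
    constructor
    · -- case τ ≤ r
      intro hτr
      beta_reduce
      rw [hfz]
      apply ENNReal.ofReal_le_ofReal
      have hAB : (0:ℝ) < τ^2 - z^2 := by nlinarith
      have hCD : (0:ℝ) < (2*r - τ - z) * (2*r + τ - z) := by positivity
      have hPfac : P = (τ^2 - z^2) * ((2*r - τ - z) * (2*r + τ - z)) := by rw [hP]; ring
      have hsplit : Real.sqrt P
          = Real.sqrt (τ^2 - z^2) * Real.sqrt ((2*r - τ - z) * (2*r + τ - z)) := by
        rw [hPfac, Real.sqrt_mul hAB.le]
      have hrtgt : Real.sqrt (2 / (τ^2 - z^2)) = Real.sqrt 2 / Real.sqrt (τ^2 - z^2) :=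
        Real.sqrt_div (by norm_num) _
      rw [hrtgt]
      have hub : (r - z)^2 ≤ (2*r - τ - z) * (2*r + τ - z) := by
        nlinarith [mul_nonneg (show (0:ℝ) ≤ 3*r + τ by linarith)
          (show (0:ℝ) ≤ r - τ by linarith), mul_pos hr (show (0:ℝ) < τ - z by linarith)]
      have hu : r - z ≤ Real.sqrt ((2*r - τ - z) * (2*r + τ - z)) := by
        rw [show r - z = Real.sqrt ((r - z)^2) from (Real.sqrt_sq hrz.le).symm]
        exact Real.sqrt_le_sqrt hub
      have hsAB : 0 < Real.sqrt (τ^2 - z^2) := Real.sqrt_pos.2 hAB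
      have hsCD : 0 < Real.sqrt ((2*r - τ - z) * (2*r + τ - z)) := Real.sqrt_pos.2 hCD
      rw [div_div, div_le_div_iff₀ (by positivity) hsAB]
      rw [hsplit]
      nlinarith [mul_pos hsAB hsCD, mul_le_mul_of_nonneg_left hu (by norm_num : (0:ℝ) ≤ 2),
        mul_nonneg (mul_nonneg hsAB.le hsCD.le) (sub_nonneg.2 h2pi),
        mul_le_mul_of_nonneg_right (mul_le_mul_of_nonneg_left hu (by norm_num : (0:ℝ) ≤ 2)) hsAB.le,
        mul_le_mul_of_nonneg_right h2pi (mul_nonneg hsAB.le hsCD.le)]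
    · -- case r < τ
      intro hrτ
      beta_reduce
      rw [hfz]
      apply ENNReal.ofReal_le_ofReal
      have hBC : (0:ℝ) < (τ + z) * (2*r - τ - z) := by positivity
      have hAD : (0:ℝ) < (τ - z) * (2*r + τ - z) := by positivity
      have hPfac : P = ((τ + z) * (2*r - τ - z)) * ((τ - z) * (2*r + τ - z)) := by
        rw [hP]; ring
      have hsplit : Real.sqrt P
          = Real.sqrt ((τ + z) * (2*r - τ - z)) * Real.sqrt ((τ - z) * (2*r + τ - z)) := by
        rw [hPfac, Real.sqrt_mul hBC.le]
      have hrtgt : Real.sqrt (2 / ((τ + z) * (2*r - τ - z)))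
          = Real.sqrt 2 / Real.sqrt ((τ + z) * (2*r - τ - z)) :=
        Real.sqrt_div (by norm_num) _
      rw [hrtgt]
      have hub : (r - z)^2 ≤ (τ - z) * (2*r + τ - z) := by
        nlinarith [mul_nonneg (show (0:ℝ) ≤ τ - r by linarith) hrz.le]
      have hu : r - z ≤ Real.sqrt ((τ - z) * (2*r + τ - z)) := by
        rw [show r - z = Real.sqrt ((r - z)^2) from (Real.sqrt_sq hrz.le).symm]
        exact Real.sqrt_le_sqrt hub
      have hsBC : 0 < Real.sqrt ((τ + z) * (2*r - τ - z)) := Real.sqrt_pos.2 hBC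
      have hsAD : 0 < Real.sqrt ((τ - z) * (2*r + τ - z)) := Real.sqrt_pos.2 hAD
      rw [div_div, div_le_div_iff₀ (by positivity) hsBC]
      rw [hsplit]
      nlinarith [mul_pos hsBC hsAD,
        mul_le_mul_of_nonneg_right (mul_le_mul_of_nonneg_left hu (by norm_num : (0:ℝ) ≤ 2)) hsBC.le,
        mul_le_mul_of_nonneg_right h2pi (mul_nonneg hsBC.le hsAD.le)]
  · -- vanishing outside
    intro z hzout
    apply Set.indicator_of_notMem
    intro hzin
    exact hzout ⟨hzin.1.le, hzin.2.le⟩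
end

section
/- Let f(x) = a*x + b be a real linear function with |a| >= 1, let c be real, and let epsilon > 0. Then the integral over x in [c, c + epsilon] of ln(1/|f(x)|) dx is at most epsilon * (ln(2/epsilon) + 1). -/
open MeasureTheory intervalIntegral Set

/-- `log` is interval integrable on `[0,1]` (through the singularity at `0`). -/
lemma logII01 : IntervalIntegrable Real.log volume 0 1 := by
  have h : IntervalIntegrable (fun x : ℝ => -Real.log x) volume 0 1 := by
    apply intervalIntegral.intervalIntegrable_deriv_of_nonneg
      (g := fun x : ℝ => x - x * Real.log x)
    · exact (continuous_id.sub Real.continuous_mul_log).continuousOn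
    · intro x hx
      simp only [min_eq_left, max_eq_right, zero_le_one, mem_Ioo] at hx
      have := (hasDerivAt_id x).sub (Real.hasDerivAt_mul_log hx.1.ne')
      convert this using 1
      · rfl
      · rfl
      · rfl
      ring
    · intro x hx
      simp only [min_eq_left, max_eq_right, zero_le_one, mem_Ioo] at hx
      simpa using Real.log_nonpos hx.1.le hx.2.le
  have h2 := h.neg
  have he : (-fun x : ℝ => -Real.log x) = Real.log := by funext x; simp
  rwa [he] at h2

lemma logII_nonneg (t : ℝ) (ht : 0 ≤ t) : IntervalIntegrable Real.log volume 0 t := by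
  rcases le_total t 1 with h1 | h1
  · refine logII01.mono_set ?_
    rw [Set.uIcc_of_le ht, Set.uIcc_of_le zero_le_one]
    exact Set.Icc_subset_Icc le_rfl h1
  · refine logII01.trans (intervalIntegrable_log ?_)
    rw [Set.uIcc_of_le h1]
    rintro ⟨h0, -⟩
    linarith

lemma logII0 (t : ℝ) : IntervalIntegrable Real.log volume 0 t := by
  rcases le_total 0 t with ht | ht
  · exact logII_nonneg t ht
  · rw [IntervalIntegrable.iff_comp_neg]
    simp only [Real.log_neg_eq_log, neg_zero]
    exact logII_nonneg (-t) (by linarith)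

lemma logII (u v : ℝ) : IntervalIntegrable Real.log volume u v :=
  (logII0 u).symm.trans (logII0 v)

lemma integral_log_zero_pos (t : ℝ) (ht : 0 < t) :
    ∫ x in (0:ℝ)..t, Real.log x = t * Real.log t - t := by
  have h := intervalIntegral.integral_eq_sub_of_hasDerivAt_of_tendsto
    (f := fun x : ℝ => x * Real.log x - x) (f' := Real.log) ht
    (fun x hx => by
      have := (Real.hasDerivAt_mul_log hx.1.ne').sub (hasDerivAt_id x)
      convert this using 1
      · rfl
      ring)
    (logII0 t)
    (fa := 0) (fb := t * Real.log t - t)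
    (by
      have : Filter.Tendsto (fun x : ℝ => x * Real.log x - x) (nhds 0) (nhds 0) := by
        have := (Real.continuous_mul_log.sub continuous_id).tendsto 0
        simp at this
        exact this
      exact this.mono_left nhdsWithin_le_nhds)
    (by
      have : Filter.Tendsto (fun x : ℝ => x * Real.log x - x) (nhds t)
          (nhds (t * Real.log t - t)) := (Real.continuous_mul_log.sub continuous_id).tendsto t
      exact this.mono_left nhdsWithin_le_nhds)
  simpa using h

lemma integral_log_zero (t : ℝ) : ∫ x in (0:ℝ)..t, Real.log x = t * Real.log t - t := by
  rcases lt_trichotomy 0 t with ht | ht | ht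
  · exact integral_log_zero_pos t ht
  · simp [← ht]
  · have h := intervalIntegral.integral_comp_neg (f := Real.log) (a := (0:ℝ)) (b := t)
    simp only [Real.log_neg_eq_log, neg_zero] at h
    rw [h, intervalIntegral.integral_symm, integral_log_zero_pos (-t) (by linarith)]
    rw [Real.log_neg_eq_log]
    ring

lemma integral_log_eq (u v : ℝ) :
    ∫ x in u..v, Real.log x = (v * Real.log v - v) - (u * Real.log u - u) := by
  have h := intervalIntegral.integral_add_adjacent_intervals (a := u) (b := 0) (c := v)
    (logII u 0) (logII 0 v)
  rw [← h, intervalIntegral.integral_symm, integral_log_zero, integral_log_zero]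
  ring

lemma key_ineq (u L : ℝ) (hL : 0 < L) (hu : -(L/2) ≤ u) :
    u * Real.log u + L * Real.log (L/2) ≤ (u + L) * Real.log (u + L) := by
  rcases le_or_gt 0 u with h0 | h0
  · have h1 : u * Real.log u ≤ u * Real.log (u + L) := by
      rcases eq_or_lt_of_le h0 with h | h
      · simp [← h]
      · exact mul_le_mul_of_nonneg_left (Real.log_le_log h (by linarith)) h0
    have h2 : L * Real.log (L/2) ≤ L * Real.log (u + L) :=
      mul_le_mul_of_nonneg_left (Real.log_le_log (by linarith) (by linarith)) hL.le
    nlinarith [h1, h2]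
  · set s : ℝ := -u with hs
    have hs0 : 0 < s := by simp [hs]; linarith
    have hsL : s ≤ L / 2 := by simp [hs]; linarith
    have hconv := Real.convexOn_mul_log.2 (x := s) (y := L - s)
      (by simp [Set.mem_Ici]; linarith) (by simp [Set.mem_Ici]; linarith)
      (by norm_num : (0:ℝ) ≤ 1/2) (by norm_num : (0:ℝ) ≤ 1/2) (by norm_num)
    simp only [smul_eq_mul] at hconv
    have hmid : (1/2 : ℝ) * s + (1/2 : ℝ) * (L - s) = L / 2 := by ring
    rw [hmid] at hconv
    have hlogu : Real.log u = Real.log s := by rw [hs, Real.log_neg_eq_log]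
    have huL : u + L = L - s := by rw [hs]; ring
    rw [hlogu, huL]
    nlinarith [hconv]

lemma key_bound (u L : ℝ) (hL : 0 < L) :
    ∫ z in u..(u + L), -Real.log z ≤ L * (Real.log (2 / L) + 1) := by
  rw [intervalIntegral.integral_neg, integral_log_eq]
  have hlog : Real.log (2 / L) = -Real.log (L / 2) := by
    rw [← inv_div, Real.log_inv]
  rw [hlog]
  have hk : u * Real.log u + L * Real.log (L/2) ≤ (u + L) * Real.log (u + L) := by
    rcases le_total (-(L/2)) u with h | h
    · exact key_ineq u L hL h
    · have h2 := key_ineq (-(u + L)) L hL (by linarith)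
      have e1 : -(u + L) + L = -u := by ring
      rw [e1, Real.log_neg_eq_log, Real.log_neg_eq_log] at h2
      nlinarith [h2]
  nlinarith [hk]

lemma main_aux (a b c ε : ℝ) (ha : 1 ≤ a) (hε : 0 < ε) :
    ∫ x in c..(c + ε), -Real.log (a * x + b) ≤ ε * (Real.log (2 / ε) + 1) := by
  have ha0 : a ≠ 0 := by linarith
  rw [intervalIntegral.integral_comp_mul_add (f := fun z => -Real.log z) ha0 b]
  have hend : a * (c + ε) + b = (a * c + b) + a * ε := by ring
  rw [hend, smul_eq_mul]
  have hL : 0 < a * ε := by positivity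
  have hk := key_bound (a * c + b) (a * ε) hL
  have ha' : 0 < a⁻¹ := by positivity
  calc a⁻¹ * ∫ z in (a * c + b)..((a * c + b) + a * ε), -Real.log z
      ≤ a⁻¹ * (a * ε * (Real.log (2 / (a * ε)) + 1)) :=
        mul_le_mul_of_nonneg_left hk ha'.le
    _ = ε * (Real.log (2 / (a * ε)) + 1) := by field_simp
    _ ≤ ε * (Real.log (2 / ε) + 1) := by
        have hlog : Real.log (2 / (a * ε)) ≤ Real.log (2 / ε) := by
          apply Real.log_le_log (by positivity)
          rw [div_le_div_iff₀ (by positivity) hε]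
          nlinarith
        nlinarith [hlog]

/-- Let `f(x) = ax + b` be a real linear function with `|a| ≥ 1`, let `c` be real and `ε > 0`.
Then `∫ₓ₌c^{c+ε} ln(1/|f(x)|) dx ≤ ε (ln(2/ε) + 1)`. -/
theorem stmt14 (a b c ε : ℝ) (ha : 1 ≤ |a|) (hε : 0 < ε) :
    ∫ x in c..(c + ε), Real.log (1 / |a * x + b|) ≤ ε * (Real.log (2 / ε) + 1) := by
  have hsimp : ∀ x : ℝ, Real.log (1 / |a * x + b|) = -Real.log (a * x + b) := by
    intro x
    rw [one_div, Real.log_inv, Real.log_abs]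
  simp only [hsimp]
  rcases abs_cases a with ⟨h1, h2⟩ | ⟨h1, h2⟩
  · exact main_aux a b c ε (h1 ▸ ha) hε
  · have hneg : ∀ x : ℝ, -Real.log (a * x + b) = -Real.log ((-a) * x + (-b)) := by
      intro x
      rw [show (-a) * x + (-b) = -(a * x + b) by ring, Real.log_neg_eq_log]
    simp only [hneg]
    exact main_aux (-a) (-b) c ε (by rw [← h1]; exact ha) hε
end

section
/- Consider a balls-into-bins process in which n balls are placed independently into k bins, where each ball j has its own probability distribution (p_1^j, ..., p_k^j) over the bins. For i in [k], let X_i be the 0-1 random variable indicating that bin i receives at least one ball. Then the random variables X_1, ..., X_k are negatively associated. -/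
open MeasureTheory

/-- `DependsOnlyOn f I` means that `f : (Fin k → ℝ) → ℝ` depends only on the coordinates
in the index set `I`. -/
def DependsOnlyOn {k : ℕ} (f : (Fin k → ℝ) → ℝ) (I : Finset (Fin k)) : Prop :=
  ∀ x y : Fin k → ℝ, (∀ i ∈ I, x i = y i) → f x = f y

/-- The random variables `X 0, …, X (k-1)` are negatively associated: for every two disjoint
index sets `I, J` and every pair of measurable functions `f, g` depending only on the
coordinates in `I` resp. `J` which are both non-decreasing or both non-increasing,
`E[f(X_i, i ∈ I) · g(X_j, j ∈ J)] ≤ E[f(X_i, i ∈ I)] · E[g(X_j, j ∈ J)]`. -/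
def NegativelyAssociated {Ω : Type*} [MeasurableSpace Ω] (μ : Measure Ω) {k : ℕ}
    (X : Fin k → Ω → ℝ) : Prop :=
  ∀ I J : Finset (Fin k), Disjoint I J →
    ∀ f g : (Fin k → ℝ) → ℝ, Measurable f → Measurable g →
      DependsOnlyOn f I → DependsOnlyOn g J →
      ((Monotone f ∧ Monotone g) ∨ (Antitone f ∧ Antitone g)) →
      ∫ ω, f (fun i => X i ω) * g (fun i => X i ω) ∂μ ≤
        (∫ ω, f (fun i => X i ω) ∂μ) * ∫ ω, g (fun i => X i ω) ∂μ

/-- The occupancy vector of a configuration of balls: `occ b i = 1` iff some ball lands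
in bin `i`. -/
def occ {n k : ℕ} (b : Fin n → Fin k) : Fin k → ℝ := fun i => if ∃ j, b j = i then 1 else 0

lemma occ_nonneg {n k : ℕ} (b : Fin n → Fin k) (i : Fin k) : 0 ≤ occ b i := by
  unfold occ; split <;> norm_num

lemma occ_cons {n k : ℕ} (c : Fin k) (b : Fin n → Fin k) :
    occ (Fin.cons c b) = fun i => max (occ b i) (if c = i then 1 else 0) := by
  funext i
  simp only [occ]
  simp only [Fin.exists_fin_succ, Fin.cons_zero, Fin.cons_succ]
  by_cases h1 : c = i <;> by_cases h2 : ∃ j, b j = i <;> simp [h1, h2]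

/-- The weight of a configuration under product probabilities `p`. -/
def wt {n k : ℕ} (p : Fin n → Fin k → ℝ) (b : Fin n → Fin k) : ℝ := ∏ j, p j (b j)

lemma wt_nonneg {n k : ℕ} {p : Fin n → Fin k → ℝ} (hp : ∀ j c, 0 ≤ p j c)
    (b : Fin n → Fin k) : 0 ≤ wt p b :=
  Finset.prod_nonneg fun j _ => hp j _

lemma wt_cons {n k : ℕ} (p : Fin (n + 1) → Fin k → ℝ) (c : Fin k) (b : Fin n → Fin k) :
    wt p (Fin.cons c b) = p 0 c * wt (fun j => p j.succ) b := by
  unfold wt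
  rw [Fin.prod_univ_succ]
  simp

/-- Key combinatorial lemma: occupancy indicators are negatively associated with respect to
any product distribution on configurations. -/
lemma core (k : ℕ) : ∀ (n : ℕ) (p : Fin n → Fin k → ℝ),
    (∀ j c, 0 ≤ p j c) → (∀ j, ∑ c, p j c = 1) →
    ∀ (f g : (Fin k → ℝ) → ℝ) (I J : Finset (Fin k)), Disjoint I J →
    DependsOnlyOn f I → DependsOnlyOn g J →
    ((Monotone f ∧ Monotone g) ∨ (Antitone f ∧ Antitone g)) →
    ∑ b : Fin n → Fin k, wt p b * (f (occ b) * g (occ b)) ≤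
      (∑ b : Fin n → Fin k, wt p b * f (occ b)) *
      ∑ b : Fin n → Fin k, wt p b * g (occ b) := by
  intro n
  induction n with
  | zero =>
      intro p hp hp1 f g I J hIJ hfI hgJ hmono
      have : ∀ b : Fin 0 → Fin k, wt p b = 1 := by
        intro b; unfold wt; simp
      simp only [Finset.univ_unique, Finset.sum_singleton, this, one_mul]
      exact le_of_eq rfl
  | succ n IH =>
      intro p hp hp1 f g I J hIJ hfI hgJ hmono
      classical
      set q : Fin n → Fin k → ℝ := fun j c => p j.succ c with hq
      have hqnn : ∀ j c, 0 ≤ q j c := fun j c => hp _ _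
      have hq1 : ∀ j, ∑ c, q j c = 1 := fun j => hp1 _
      -- the "conditioned" functions
      set fm : Fin k → (Fin k → ℝ) → ℝ :=
        fun c z => f (fun i => max (z i) (if c = i then 1 else 0)) with hfm
      set gm : Fin k → (Fin k → ℝ) → ℝ :=
        fun c z => g (fun i => max (z i) (if c = i then 1 else 0)) with hgm
      have hfm_eq : ∀ (c : Fin k) (b : Fin n → Fin k),
          f (occ (Fin.cons c b)) = fm c (occ b) := by
        intro c b; rw [occ_cons]
      have hgm_eq : ∀ (c : Fin k) (b : Fin n → Fin k),
          g (occ (Fin.cons c b)) = gm c (occ b) := by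
        intro c b; rw [occ_cons]
      have hfmI : ∀ c, DependsOnlyOn (fm c) I := by
        intro c x y hxy
        exact hfI _ _ (fun i hi => by rw [hxy i hi])
      have hgmJ : ∀ c, DependsOnlyOn (gm c) J := by
        intro c x y hxy
        exact hgJ _ _ (fun i hi => by rw [hxy i hi])
      have hmono' : ∀ c, (Monotone (fm c) ∧ Monotone (gm c)) ∨
          (Antitone (fm c) ∧ Antitone (gm c)) := by
        intro c
        rcases hmono with ⟨h1, h2⟩ | ⟨h1, h2⟩
        · exact Or.inl ⟨fun x y hxy => h1 (fun i => max_le_max (hxy i) le_rfl),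
            fun x y hxy => h2 (fun i => max_le_max (hxy i) le_rfl)⟩
        · exact Or.inr ⟨fun x y hxy => h1 (fun i => max_le_max (hxy i) le_rfl),
            fun x y hxy => h2 (fun i => max_le_max (hxy i) le_rfl)⟩
      -- decompose sums over the first ball
      have hsum : ∀ F : (Fin (n + 1) → Fin k) → ℝ,
          ∑ b, F b = ∑ c : Fin k, ∑ b : Fin n → Fin k, F (Fin.cons c b) := by
        intro F
        rw [← Equiv.sum_comp (Fin.consEquiv (fun _ : Fin (n + 1) => Fin k)) F,
          Fintype.sum_prod_type]
        rfl
      set F : Fin k → ℝ := fun c => ∑ b : Fin n → Fin k, wt q b * fm c (occ b) with hF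
      set G : Fin k → ℝ := fun c => ∑ b : Fin n → Fin k, wt q b * gm c (occ b) with hG
      set F0 : ℝ := ∑ b : Fin n → Fin k, wt q b * f (occ b) with hF0
      set G0 : ℝ := ∑ b : Fin n → Fin k, wt q b * g (occ b) with hG0
      -- rewrite the three big sums
      have hLHS : ∑ b : Fin (n + 1) → Fin k, wt p b * (f (occ b) * g (occ b)) =
          ∑ c : Fin k, p 0 c *
            ∑ b : Fin n → Fin k, wt q b * (fm c (occ b) * gm c (occ b)) := by
        rw [hsum]
        refine Finset.sum_congr rfl (fun c _ => ?_)
        rw [Finset.mul_sum]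
        refine Finset.sum_congr rfl (fun b _ => ?_)
        rw [wt_cons, hfm_eq, hgm_eq]
        ring
      have hRF : ∑ b : Fin (n + 1) → Fin k, wt p b * f (occ b) =
          ∑ c : Fin k, p 0 c * F c := by
        rw [hsum]
        refine Finset.sum_congr rfl (fun c _ => ?_)
        rw [hF, Finset.mul_sum]
        refine Finset.sum_congr rfl (fun b _ => ?_)
        rw [wt_cons, hfm_eq]
        ring
      have hRG : ∑ b : Fin (n + 1) → Fin k, wt p b * g (occ b) =
          ∑ c : Fin k, p 0 c * G c := by
        rw [hsum]
        refine Finset.sum_congr rfl (fun c _ => ?_)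
        rw [hG, Finset.mul_sum]
        refine Finset.sum_congr rfl (fun b _ => ?_)
        rw [wt_cons, hgm_eq]
        ring
      -- inductive step: conditioned on the first ball landing in bin `c`
      have step1 : ∀ c : Fin k,
          ∑ b : Fin n → Fin k, wt q b * (fm c (occ b) * gm c (occ b)) ≤ F c * G c := by
        intro c
        exact IH q hqnn hq1 (fm c) (gm c) I J hIJ (hfmI c) (hgmJ c) (hmono' c)
      -- properties of the increments
      have hFa0 : ∀ c : Fin k, c ∉ I → F c = F0 := by
        intro c hc
        refine Finset.sum_congr rfl (fun b _ => ?_)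
        congr 1
        refine hfI _ _ (fun i hi => ?_)
        have hci : c ≠ i := fun h => hc (h ▸ hi)
        simp [hci, max_eq_left (occ_nonneg b i)]
      have hGb0 : ∀ c : Fin k, c ∉ J → G c = G0 := by
        intro c hc
        refine Finset.sum_congr rfl (fun b _ => ?_)
        congr 1
        refine hgJ _ _ (fun i hi => ?_)
        have hci : c ≠ i := fun h => hc (h ▸ hi)
        simp [hci, max_eq_left (occ_nonneg b i)]
      have hab : ∀ c : Fin k, (F c - F0) * (G c - G0) = 0 := by
        intro c
        by_cases hc : c ∈ I
        · have : c ∉ J := fun hcJ => (Finset.disjoint_left.mp hIJ hc) hcJ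
          rw [hGb0 c this]; ring
        · rw [hFa0 c hc]; ring
      have hle_vec : ∀ (c : Fin k) (b : Fin n → Fin k),
          occ b ≤ fun i => max (occ b i) (if c = i then (1 : ℝ) else 0) :=
        fun c b i => le_max_left _ _
      have hsign : (∀ c, 0 ≤ F c - F0 ∧ 0 ≤ G c - G0) ∨
          (∀ c, F c - F0 ≤ 0 ∧ G c - G0 ≤ 0) := by
        rcases hmono with ⟨h1, h2⟩ | ⟨h1, h2⟩
        · left
          intro c
          constructor
          · have : F0 ≤ F c := by
              refine Finset.sum_le_sum (fun b _ => ?_)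
              exact mul_le_mul_of_nonneg_left (h1 (hle_vec c b)) (wt_nonneg hqnn b)
            linarith
          · have : G0 ≤ G c := by
              refine Finset.sum_le_sum (fun b _ => ?_)
              exact mul_le_mul_of_nonneg_left (h2 (hle_vec c b)) (wt_nonneg hqnn b)
            linarith
        · right
          intro c
          constructor
          · have : F c ≤ F0 := by
              refine Finset.sum_le_sum (fun b _ => ?_)
              exact mul_le_mul_of_nonneg_left (h1 (hle_vec c b)) (wt_nonneg hqnn b)
            linarith
          · have : G c ≤ G0 := by
              refine Finset.sum_le_sum (fun b _ => ?_)
              exact mul_le_mul_of_nonneg_left (h2 (hle_vec c b)) (wt_nonneg hqnn b)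
            linarith
      set Sa : ℝ := ∑ c : Fin k, p 0 c * (F c - F0) with hSa
      set Sb : ℝ := ∑ c : Fin k, p 0 c * (G c - G0) with hSb
      have hSaSb : 0 ≤ Sa * Sb := by
        rcases hsign with hs | hs
        · exact mul_nonneg
            (Finset.sum_nonneg fun c _ => mul_nonneg (hp 0 c) (hs c).1)
            (Finset.sum_nonneg fun c _ => mul_nonneg (hp 0 c) (hs c).2)
        · have h1 : Sa ≤ 0 :=
            Finset.sum_nonpos fun c _ => mul_nonpos_of_nonneg_of_nonpos (hp 0 c) (hs c).1
          have h2 : Sb ≤ 0 :=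
            Finset.sum_nonpos fun c _ => mul_nonpos_of_nonneg_of_nonpos (hp 0 c) (hs c).2
          nlinarith
      have hsumF : ∑ c : Fin k, p 0 c * F c = F0 + Sa := by
        have h : ∀ c : Fin k, p 0 c * F c = F0 * p 0 c + p 0 c * (F c - F0) := by
          intro c; ring
        rw [Finset.sum_congr rfl (fun c _ => h c), Finset.sum_add_distrib,
          ← Finset.mul_sum, hp1 0, mul_one, hSa]
      have hsumG : ∑ c : Fin k, p 0 c * G c = G0 + Sb := by
        have h : ∀ c : Fin k, p 0 c * G c = G0 * p 0 c + p 0 c * (G c - G0) := by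
          intro c; ring
        rw [Finset.sum_congr rfl (fun c _ => h c), Finset.sum_add_distrib,
          ← Finset.mul_sum, hp1 0, mul_one, hSb]
      have hsumFG : ∑ c : Fin k, p 0 c * (F c * G c) =
          F0 * G0 + F0 * Sb + G0 * Sa := by
        have h : ∀ c : Fin k, p 0 c * (F c * G c) =
            (F0 * G0) * p 0 c + F0 * (p 0 c * (G c - G0)) + G0 * (p 0 c * (F c - F0)) := by
          intro c
          linear_combination (p 0 c) * hab c
        rw [Finset.sum_congr rfl (fun c _ => h c), Finset.sum_add_distrib,
          Finset.sum_add_distrib, ← Finset.mul_sum, ← Finset.mul_sum, ← Finset.mul_sum,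
          hp1 0, mul_one, ← hSa, ← hSb]
      -- put it together
      rw [hLHS, hRF, hRG, hsumF, hsumG]
      calc ∑ c : Fin k, p 0 c *
            ∑ b : Fin n → Fin k, wt q b * (fm c (occ b) * gm c (occ b))
          ≤ ∑ c : Fin k, p 0 c * (F c * G c) :=
            Finset.sum_le_sum fun c _ => mul_le_mul_of_nonneg_left (step1 c) (hp 0 c)
        _ = F0 * G0 + F0 * Sb + G0 * Sa := hsumFG
        _ ≤ (F0 + Sa) * (G0 + Sb) := by nlinarith [hSaSb]

/-- Consider a balls-into-bins process in which `n` balls are placed independently into `k`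
bins, where each ball has its own probability distribution over the bins. For each bin `i`,
let `X_i` be the 0-1 random variable indicating that bin `i` receives at least one ball. Then
the random variables `X_1, …, X_k` are negatively associated. -/
theorem stmt17 {Ω : Type*} [MeasurableSpace Ω] (μ : Measure Ω) [IsProbabilityMeasure μ]
    (n k : ℕ) (B : Fin n → Ω → Fin k)
    (hmeas : ∀ j, Measurable (B j))
    (hindep : ProbabilityTheory.iIndepFun B μ) :
    NegativelyAssociated μ (fun i ω => if ∃ j, B j ω = i then (1 : ℝ) else 0) := by
  intro I J hIJ f g hf hg hfI hgJ hmono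
  classical
  set A : (Fin n → Fin k) → Set Ω := fun b => ⋂ j, B j ⁻¹' {b j} with hA
  have hAmeas : ∀ b, MeasurableSet (A b) := fun b =>
    MeasurableSet.iInter fun j => (hmeas j) (measurableSet_singleton _)
  set p : Fin n → Fin k → ℝ := fun j c => (μ (B j ⁻¹' {c})).toReal with hp_def
  have hp : ∀ j c, 0 ≤ p j c := fun j c => ENNReal.toReal_nonneg
  have hp1 : ∀ j, ∑ c, p j c = 1 := by
    intro j
    have h1 : ∑ c : Fin k, μ (B j ⁻¹' {c}) = μ Set.univ := by
      rw [sum_measure_preimage_singleton Finset.univ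
        (fun c _ => hmeas j (measurableSet_singleton c))]
      simp
    have h2 : ∑ c : Fin k, p j c = (∑ c : Fin k, μ (B j ⁻¹' {c})).toReal := by
      rw [ENNReal.toReal_sum (fun c _ => measure_ne_top μ _)]
    rw [h2, h1, measure_univ, ENNReal.toReal_one]
  have hwt : ∀ b, (μ (A b)).toReal = wt p b := by
    intro b
    have : μ (A b) = ∏ j, μ (B j ⁻¹' {b j}) := by
      refine hindep.meas_iInter (fun j => ?_)
      exact ⟨{b j}, measurableSet_singleton _, rfl⟩
    rw [this, ENNReal.toReal_prod]
    rfl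
  -- integrals as finite sums
  have key : ∀ h : (Fin k → ℝ) → ℝ,
      ∫ ω, h (fun i => if ∃ j, B j ω = i then (1 : ℝ) else 0) ∂μ
        = ∑ b : Fin n → Fin k, (μ (A b)).toReal * h (occ b) := by
    intro h
    have hfun : (fun ω => h (fun i => if ∃ j, B j ω = i then (1 : ℝ) else 0))
        = fun ω => ∑ b : Fin n → Fin k, (A b).indicator (fun _ => h (occ b)) ω := by
      funext ω
      rw [Finset.sum_eq_single (fun j => B j ω)]
      · have hmem : ω ∈ A (fun j => B j ω) := by
          simp [hA, Set.mem_iInter]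
        rw [Set.indicator_of_mem hmem]
        rfl
      · intro b _ hb
        have : ω ∉ A b := by
          intro hω
          apply hb
          funext j
          have := Set.mem_iInter.mp hω j
          simpa using this.symm
        rw [Set.indicator_of_notMem this]
      · intro habs
        exact absurd (Finset.mem_univ _) habs
    rw [hfun, integral_finset_sum]
    · refine Finset.sum_congr rfl (fun b _ => ?_)
      rw [integral_indicator_const _ (hAmeas b), smul_eq_mul, measureReal_def]
    · intro b _
      exact (integrable_const _).indicator (hAmeas b)
  have e1 : ∫ ω, f (fun i => if ∃ j, B j ω = i then (1 : ℝ) else 0) *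
      g (fun i => if ∃ j, B j ω = i then (1 : ℝ) else 0) ∂μ
      = ∑ b : Fin n → Fin k, wt p b * (f (occ b) * g (occ b)) := by
    rw [key (fun z => f z * g z)]
    exact Finset.sum_congr rfl (fun b _ => by rw [hwt b])
  have e2 : ∫ ω, f (fun i => if ∃ j, B j ω = i then (1 : ℝ) else 0) ∂μ
      = ∑ b : Fin n → Fin k, wt p b * f (occ b) := by
    rw [key f]
    exact Finset.sum_congr rfl (fun b _ => by rw [hwt b])
  have e3 : ∫ ω, g (fun i => if ∃ j, B j ω = i then (1 : ℝ) else 0) ∂μ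
      = ∑ b : Fin n → Fin k, wt p b * g (occ b) := by
    rw [key g]
    exact Finset.sum_congr rfl (fun b _ => by rw [hwt b])
  simp only [] at e1 e2 e3 ⊢
  rw [e1, e2, e3]
  exact core k n p hp hp1 f g I J hIJ hfI hgJ hmono
end

section
/- Let n, k, d be positive integers with k = l^d for some positive integer l, and let v_1, ..., v_n be points in the unit hypercube [0,1]^d. Partition [0,1]^d into k subcubes of side length 1/l. If the number X of subcubes containing at least one of the points satisfies X > 3^d, then for any metric induced by an Lp norm, the shortest Hamiltonian cycle through v_1, ..., v_n has length at least ceil(X / 3^d) * (1 / k^{1/d}). -/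
open scoped ENNReal

section Aux19

lemma greedy19 {β : Type*} [DecidableEq β] (near : β → β → Prop) [DecidableRel near]
    (hrefl : ∀ a, near a a) (hsymm : ∀ a b, near a b → near b a) (S : Finset β) :
    ∃ P ⊆ S, (∀ a ∈ P, ∀ b ∈ P, a ≠ b → ¬ near a b) ∧ ∀ s ∈ S, ∃ p ∈ P, near p s := by
  induction S using Finset.strongInduction with
  | _ S ih =>
    rcases S.eq_empty_or_nonempty with rfl | ⟨s, hs⟩
    · exact ⟨∅, by simp⟩
    · have hss : S.filter (fun c => ¬ near s c) ⊂ S :=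
        Finset.filter_ssubset.2 ⟨s, hs, by simp [hrefl]⟩
      obtain ⟨P, hPsub, hPfar, hPcov⟩ := ih _ hss
      have hPS : P ⊆ S := hPsub.trans (Finset.filter_subset _ _)
      have hPnear : ∀ b ∈ P, ¬ near s b := fun b hb => (Finset.mem_filter.1 (hPsub hb)).2
      refine ⟨insert s P, Finset.insert_subset hs hPS, ?_, ?_⟩
      · intro a ha b hb hab
        rcases Finset.mem_insert.1 ha with hea | ha
        · rcases Finset.mem_insert.1 hb with heb | hb
          · exact absurd (hea.trans heb.symm) hab
          · rw [hea]; exact hPnear b hb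
        · rcases Finset.mem_insert.1 hb with heb | hb
          · rw [heb]; exact fun hn => hPnear a ha (hsymm _ _ hn)
          · exact hPfar a ha b hb hab
      · intro c hc
        by_cases hnc : near s c
        · exact ⟨s, Finset.mem_insert_self _ _, hnc⟩
        · obtain ⟨q, hq, hnq⟩ := hPcov c (Finset.mem_filter.2 ⟨hc, hnc⟩)
          exact ⟨q, Finset.mem_insert_of_mem hq, hnq⟩

lemma near_card19 {d l : ℕ} (b : Fin d → Fin l) :
    (Finset.univ.filter
      (fun c : Fin d → Fin l => ∀ j, ((b j : ℤ) - (c j : ℤ)).natAbs ≤ 1)).card ≤ 3 ^ d := by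
  have hcard : ((Finset.univ : Finset (Fin d → Fin 3))).card = 3 ^ d := by
    simp [Fintype.card_fun]
  rw [← hcard]
  apply Finset.card_le_card_of_injOn
    (fun c => fun j => (⟨((c j : ℤ) - (b j : ℤ) + 1).toNat % 3, Nat.mod_lt _ (by norm_num)⟩ : Fin 3))
  · intro c _; exact Finset.mem_univ _
  · intro c hc c' hc' h
    have hc1 := (Finset.mem_filter.1 hc).2
    have hc2 := (Finset.mem_filter.1 hc').2
    simp only [funext_iff, Fin.ext_iff] at h
    funext j
    have hv := h j
    have b1 := hc1 j
    have b2 := hc2 j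
    have hval : (c j : ℕ) = (c' j : ℕ) := by omega
    exact Fin.ext hval

lemma sum_edge_Ico19 {α : Type*} [PseudoMetricSpace α] (W : ℕ → α) (n : ℕ)
    (hW : ∀ i, W (i + n) = W i) (a : ℕ) :
    ∑ i ∈ Finset.Ico a (a + n), dist (W i) (W (i + 1))
      = ∑ i ∈ Finset.range n, dist (W i) (W (i + 1)) := by
  induction a with
  | zero => simp
  | succ a ih =>
    rcases Nat.eq_zero_or_pos n with rfl | hn
    · simp
    rw [← ih]
    rw [show a + 1 + n = a + n + 1 from by omega,
      Finset.sum_Ico_succ_top (by omega : a + 1 ≤ a + n),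
      show ∑ i ∈ Finset.Ico a (a+n), dist (W i) (W (i+1))
        = dist (W a) (W (a+1)) + ∑ i ∈ Finset.Ico (a+1) (a+n), dist (W i) (W (i+1)) from
        (Finset.sum_eq_sum_Ico_succ_bot (by omega) _)]
    have h1 : W (a + n) = W a := hW a
    have h2 : W (a + n + 1) = W (a + 1) := by rw [show a + n + 1 = (a+1) + n from by omega, hW]
    rw [h1, h2, add_comm]

lemma chain_le19 {α : Type*} [PseudoMetricSpace α] (W : ℕ → α) (u : ℕ → ℕ) :
    ∀ m : ℕ, (∀ j < m, u j ≤ u (j + 1)) →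
    ∑ j ∈ Finset.range m, dist (W (u j)) (W (u (j + 1)))
      ≤ ∑ i ∈ Finset.Ico (u 0) (u m), dist (W i) (W (i + 1)) := by
  intro m
  induction m with
  | zero => simp
  | succ m ih =>
    intro hmono
    have h0m : u 0 ≤ u m := by
      clear ih
      induction m with
      | zero => exact le_rfl
      | succ m ih2 => exact le_trans (ih2 (fun j hj => hmono j (by omega))) (hmono m (by omega))
    rw [Finset.sum_range_succ, ← Finset.sum_Ico_consecutive _ h0m (hmono m (by omega))]
    exact add_le_add (ih (fun j hj => hmono j (by omega)))
      (dist_le_Ico_sum_dist W (hmono m (by omega)))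

lemma far_dist19 {d l : ℕ} (hl : 1 ≤ l) (p : ℝ≥0∞) [Fact (1 ≤ p)]
    (x y : PiLp p (fun _ : Fin d => ℝ)) (a b : Fin d → Fin l)
    (hx : ∀ j, ((a j : ℝ)) / l ≤ x j ∧ x j ≤ ((a j : ℝ) + 1) / l)
    (hy : ∀ j, ((b j : ℝ)) / l ≤ y j ∧ y j ≤ ((b j : ℝ) + 1) / l)
    (j : Fin d) (hfar : 1 < ((a j : ℤ) - (b j : ℤ)).natAbs) :
    1 / (l : ℝ) ≤ dist x y := by
  have hl0 : (0:ℝ) < l := by exact_mod_cast hl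
  have coord : dist (x j) (y j) ≤ dist x y := by
    have h := (PiLp.lipschitzWith_ofLp p (fun _ : Fin d => ℝ)).dist_le_mul x y
    simp only [NNReal.coe_one, one_mul] at h
    exact le_trans (dist_le_pi_dist (WithLp.equiv p _ x) (WithLp.equiv p _ y) j) h
  have key : 1 / (l : ℝ) ≤ dist (x j) (y j) := by
    rw [Real.dist_eq]
    have h2 : ((a j : ℤ)) + 2 ≤ (b j : ℤ) ∨ ((b j : ℤ)) + 2 ≤ (a j : ℤ) := by omega
    rcases h2 with h2 | h2
    · have hab : ((a j : ℝ)) + 2 ≤ (b j : ℝ) := by exact_mod_cast h2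
      have h4 : ((a j : ℝ) + 2) / l ≤ (b j : ℝ) / l := by gcongr
      have h3 : ((a j : ℝ) + 1) / l + 1 / l = ((a j : ℝ) + 2) / l := by ring
      have h1 := (hx j).2
      have h5 := (hy j).1
      rw [abs_sub_comm]
      exact le_trans (by linarith) (le_abs_self _)
    · have hab : ((b j : ℝ)) + 2 ≤ (a j : ℝ) := by exact_mod_cast h2
      have h4 : ((b j : ℝ) + 2) / l ≤ (a j : ℝ) / l := by gcongr
      have h3 : ((b j : ℝ) + 1) / l + 1 / l = ((b j : ℝ) + 2) / l := by ring
      have h1 := (hx j).1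
      have h5 := (hy j).2
      exact le_trans (by linarith) (le_abs_self _)
  linarith

end Aux19


/-- Let `n, l, d` be positive integers, `k = l^d`, and let `v_1, …, v_n` be points of the unit
hypercube `[0,1]^d`. Partition `[0,1]^d` into `k` subcubes of side length `1/l` (the point
`v_i` lies in the subcube indexed by `idx i`). If the number `X` of subcubes containing at
least one point satisfies `X > 3^d`, then for every metric induced by an `L_p` norm
(`1 ≤ p ≤ ∞`), every Hamiltonian cycle through `v_1, …, v_n` has length at least
`⌈X/3^d⌉ · (1/k^{1/d})`. -/
theorem stmt19 (d l n : ℕ) (hd : 1 ≤ d) (hl : 1 ≤ l) [NeZero n]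
    (p : ℝ≥0∞) [Fact (1 ≤ p)]
    (v : Fin n → PiLp p (fun _ : Fin d => ℝ))
    (hv : ∀ i j, v i j ∈ Set.Icc (0 : ℝ) 1)
    (idx : Fin n → (Fin d → Fin l))
    (hidx : ∀ i j, ((idx i j : ℝ)) / l ≤ v i j ∧ v i j ≤ ((idx i j : ℝ) + 1) / l)
    (X : ℕ) (hX : X = (Finset.image idx Finset.univ).card)
    (hX3 : 3 ^ d < X) :
    ∀ σ : Equiv.Perm (Fin n),
      (⌈(X : ℝ) / 3 ^ d⌉ : ℝ) * (1 / ((l ^ d : ℝ) ^ ((1 : ℝ) / d)))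
        ≤ ∑ i : Fin n, dist (v (σ i)) (v (σ (i + 1))) := by
  intro σ
  open Fin.NatCast in classical
  have hd0 : (d:ℝ) ≠ 0 := Nat.cast_ne_zero.2 (by omega)
  have hl0 : (0:ℝ) < l := by exact_mod_cast hl
  have hk : ((l ^ d : ℝ) ^ ((1:ℝ)/d)) = (l:ℝ) := by
    rw [← Real.rpow_natCast (l:ℝ) d, ← Real.rpow_mul hl0.le, mul_one_div, div_self hd0,
      Real.rpow_one]
  set near : (Fin d → Fin l) → (Fin d → Fin l) → Prop :=
    fun a b => ∀ j, ((a j : ℤ) - (b j : ℤ)).natAbs ≤ 1 with hnear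
  obtain ⟨P, hPS, hPfar, hPcov⟩ := greedy19 near (fun a j => by simp)
    (fun a b h j => by have := h j; omega) (Finset.image idx Finset.univ)
  -- counting bound
  have hXP : X ≤ 3 ^ d * P.card := by
    rw [hX]
    set g : (Fin d → Fin l) → (Fin d → Fin l) :=
      fun s => if h : ∃ q ∈ P, near q s then h.choose else s with hgdef
    have hg : ∀ s ∈ Finset.image idx Finset.univ, g s ∈ P ∧ near (g s) s := by
      intro s hs
      obtain ⟨q, hq, hn⟩ := hPcov s hs
      have hex : ∃ q ∈ P, near q s := ⟨q, hq, hn⟩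
      simp only [hgdef, dif_pos hex]
      exact ⟨hex.choose_spec.1, hex.choose_spec.2⟩
    apply Finset.card_le_mul_card_image_of_maps_to (fun s hs => (hg s hs).1)
    intro q hq
    calc ((Finset.image idx Finset.univ).filter (fun a => g a = q)).card
        ≤ (Finset.univ.filter
            (fun c : Fin d → Fin l => ∀ j, ((q j : ℤ) - (c j : ℤ)).natAbs ≤ 1)).card := by
          apply Finset.card_le_card
          intro c hc
          obtain ⟨hcS, hgc⟩ := Finset.mem_filter.1 hc
          refine Finset.mem_filter.2 ⟨Finset.mem_univ _, ?_⟩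
          have := (hg c hcS).2
          rw [hgc] at this
          exact this
      _ ≤ 3 ^ d := near_card19 q
  have hm2 : 2 ≤ P.card := by
    by_contra h
    have h1 : 3 ^ d * P.card ≤ 3 ^ d * 1 := Nat.mul_le_mul_left _ (by omega)
    omega
  set m := P.card with hm
  have hceil : (⌈(X:ℝ)/3^d⌉ : ℝ) ≤ (m:ℝ) := by
    have h3 : (0:ℝ) < 3^d := by positivity
    have hle : (X:ℝ)/3^d ≤ (m:ℝ) := by
      rw [div_le_iff₀ h3]
      have : (X:ℝ) ≤ ((3^d * m : ℕ) : ℝ) := by exact_mod_cast hXP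
      push_cast at this ⊢
      linarith
    have : ⌈(X:ℝ)/3^d⌉ ≤ (m : ℤ) := Int.ceil_le.mpr (by exact_mod_cast hle)
    exact_mod_cast this
  -- the walk
  set W : ℕ → PiLp p (fun _ : Fin d => ℝ) := fun i => v (σ ((i : ℕ) : Fin n)) with hWdef
  have hWper : ∀ i, W (i + n) = W i := by
    intro i
    have : ((i + n : ℕ) : Fin n) = ((i : ℕ) : Fin n) := by
      simp [Nat.cast_add, Fin.natCast_self]
    simp only [hWdef, this]
  have hsum : ∑ i : Fin n, dist (v (σ i)) (v (σ (i+1)))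
      = ∑ i ∈ Finset.range n, dist (W i) (W (i+1)) := by
    rw [← Fin.sum_univ_eq_sum_range (fun i => dist (W i) (W (i+1))) n]
    apply Finset.sum_congr rfl
    intro i _
    have h1 : (((i : ℕ)) : Fin n) = i := Fin.cast_val_eq_self i
    have h2 : (((i : ℕ) + 1 : ℕ) : Fin n) = i + 1 := by
      push_cast
      rfl
    simp only [hWdef, h1, h2]
  -- positions in the tour for each cell of P
  have hpos : ∀ c ∈ P, ∃ rr : ℕ, rr < n ∧ idx (σ ((rr : ℕ) : Fin n)) = c := by
    intro c hc
    obtain ⟨i, _, hi⟩ := Finset.mem_image.1 (hPS hc)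
    refine ⟨(σ⁻¹ i).val, (σ⁻¹ i).isLt, ?_⟩
    rw [Fin.cast_val_eq_self, Equiv.Perm.coe_inv, Equiv.apply_symm_apply, hi]
  choose! r hrlt hridx using hpos
  set T := P.image r with hT
  have hrinj : Set.InjOn r P := by
    intro c1 h1 c2 h2 he
    rw [← hridx c1 h1, ← hridx c2 h2, he]
  have hTcard : T.card = m := Finset.card_image_of_injOn hrinj
  set t : Fin m ↪o ℕ := T.orderEmbOfFin hTcard with htdef
  have htT : ∀ j, t j ∈ T := fun j => T.orderEmbOfFin_mem hTcard j
  have htprop : ∀ j : Fin m, t j < n ∧ idx (σ ((t j : ℕ) : Fin n)) ∈ P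
      ∧ r (idx (σ ((t j : ℕ) : Fin n))) = t j := by
    intro j
    obtain ⟨c, hc, hcr⟩ := Finset.mem_image.1 (htT j)
    rw [← hcr, hridx c hc]
    exact ⟨hrlt c hc, hc, rfl⟩
  have hcells_ne : ∀ j j' : Fin m, j ≠ j' →
      idx (σ ((t j : ℕ) : Fin n)) ≠ idx (σ ((t j' : ℕ) : Fin n)) := by
    intro j j' hne heq
    have h1 := (htprop j).2.2
    have h2 := (htprop j').2.2
    rw [heq] at h1
    exact hne (t.injective (h1.symm.trans h2))
  have hfarbound : ∀ j1 j2 : Fin m, j1 ≠ j2 →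
      1/(l:ℝ) ≤ dist (W (t j1)) (W (t j2)) := by
    intro j1 j2 hne
    have hc1 := (htprop j1).2.1
    have hc2 := (htprop j2).2.1
    have hnn : ¬ near (idx (σ ((t j1 : ℕ) : Fin n))) (idx (σ ((t j2 : ℕ) : Fin n))) :=
      hPfar _ hc1 _ hc2 (hcells_ne j1 j2 hne)
    simp only [hnear, not_forall, not_le] at hnn
    obtain ⟨jj, hjj⟩ := hnn
    exact far_dist19 hl p (W (t j1)) (W (t j2)) _ _
      (hidx (σ ((t j1 : ℕ) : Fin n))) (hidx (σ ((t j2 : ℕ) : Fin n))) jj (by omega)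
  have hm0 : 0 < m := by omega
  set t0 : Fin m := ⟨0, hm0⟩ with ht0
  set u : ℕ → ℕ := fun j => if h : j < m then t ⟨j, h⟩ else t t0 + n with hu
  have humono : ∀ j < m, u j ≤ u (j+1) := by
    intro j hj
    by_cases h2 : j + 1 < m
    · simp only [hu, dif_pos hj, dif_pos h2]
      exact le_of_lt (t.strictMono (Fin.mk_lt_mk.2 (by omega)))
    · simp only [hu, dif_pos hj, dif_neg h2]
      have := (htprop ⟨j, hj⟩).1
      omega
  have hu0 : u 0 = t t0 := by
    simp only [hu, dif_pos hm0]
    rfl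
  have hum : u m = t t0 + n := by
    simp only [hu, dif_neg (lt_irrefl m)]
  have hterm : ∀ j ∈ Finset.range m, 1/(l:ℝ) ≤ dist (W (u j)) (W (u (j+1))) := by
    intro j hjr
    have hj : j < m := Finset.mem_range.1 hjr
    by_cases h2 : j + 1 < m
    · have e1 : u j = t ⟨j, hj⟩ := dif_pos hj
      have e2 : u (j+1) = t ⟨j+1, h2⟩ := dif_pos h2
      rw [e1, e2]
      exact hfarbound ⟨j, hj⟩ ⟨j+1, h2⟩ (by simp [Fin.ext_iff])
    · have e1 : u j = t ⟨j, hj⟩ := dif_pos hj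
      have e2 : u (j+1) = t t0 + n := dif_neg h2
      rw [e1, e2, hWper]
      exact hfarbound ⟨j, hj⟩ t0 (by simp [Fin.ext_iff, ht0]; omega)
  calc (⌈(X:ℝ)/3^d⌉ : ℝ) * (1 / ((l ^ d : ℝ) ^ ((1:ℝ)/d)))
      = (⌈(X:ℝ)/3^d⌉ : ℝ) * (1/(l:ℝ)) := by rw [hk]
    _ ≤ (m:ℝ) * (1/(l:ℝ)) := mul_le_mul_of_nonneg_right hceil (by positivity)
    _ = ∑ _j ∈ Finset.range m, (1/(l:ℝ)) := by
        rw [Finset.sum_const, Finset.card_range, nsmul_eq_mul]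
    _ ≤ ∑ j ∈ Finset.range m, dist (W (u j)) (W (u (j+1))) := Finset.sum_le_sum hterm
    _ ≤ ∑ i ∈ Finset.Ico (u 0) (u m), dist (W i) (W (i+1)) := chain_le19 W u m humono
    _ = ∑ i ∈ Finset.range n, dist (W i) (W (i+1)) := by
        rw [hu0, hum]
        exact sum_edge_Ico19 W n hWper _
    _ = ∑ i : Fin n, dist (v (σ i)) (v (σ (i+1))) := hsum.symm
end
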